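/- arXiv:1704.00222 — 12 statements merged into one kernel-verified Lean document; each statement's English description precedes it below -/
import Mathlib

section
/- Let M be a finite set of items, n ≥ 1 an integer, and for each agent i ∈ {1, …, n} let V_i be a monotone submodular valuation on subsets of M with V_i(∅) = 0 and V_i(S) ≥ 0 for every S ⊆ M. Then there exists an allocation A_1, …, A_n of M such that V_i(A_i) ≥ (1/3) · MMS_{V_i}^n(M) for every agent i. -/
/-- `A` is a partition of the finite set `M` into `r` pairwise disjoint
(possibly empty) bundles whose union is `M`. -/
def IsPartition {ι : Type*} [DecidableEq ι] {r : ℕ} (M : Finset ι) (A : Fin r → Finset ι) : Prop :=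
  (∀ i j, i ≠ j → Disjoint (A i) (A j)) ∧ Finset.univ.biUnion A = M

/-- The maximin share `MMS_f^r(M)`. -/
noncomputable def MMS {ι : Type*} [DecidableEq ι] (M : Finset ι) (f : Finset ι → ℝ) (r : ℕ) : ℝ :=
  sSup { x : ℝ | ∃ A : Fin r → Finset ι, IsPartition M A ∧ x = ⨅ j, f (A j) }

/-- A valuation is submodular. -/
def Submodular {ι : Type*} [DecidableEq ι] (V : Finset ι → ℝ) : Prop :=
  ∀ A B : Finset ι, V (A ∪ B) + V (A ∩ B) ≤ V A + V B

/-!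
If some agent values a single item at a third of her maximin share, she takes it and leaves:
removing one item and one part does not decrease the maximin shares of the others, so we recurse.
Otherwise every item is small, and the greedy round robin (each agent in turn picks a remaining
item of largest marginal value) works. Fix an agent with final bundle `S` and maximin share `μ`.
Every item outside `S` was picked while she had an earlier turn, where she gained at least its
marginal value over `S`, except for the first `n` picks, which are small; hence the marginal values
over `S` of all items sum to at most `n (μ / 3 + V S)`. For an optimal maximin partition `P`,
submodularity gives `μ ≤ V (P j) ≤ V S + ∑ y ∈ P j, marginal S y`; summing over `j` yields
`μ ≤ 2 V S + μ / 3`.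
-/

open Finset

section

variable {ι : Type*} [DecidableEq ι]

def marginal (V : Finset ι → ℝ) (S : Finset ι) (x : ι) : ℝ := V (insert x S) - V S

section Marginal

variable {V : Finset ι → ℝ} {S T : Finset ι} {x : ι}

lemma marginal_nonneg (hV : Monotone V) : 0 ≤ marginal V S x :=
  sub_nonneg.2 (hV (subset_insert x S))

lemma marginal_of_mem (hx : x ∈ S) : marginal V S x = 0 := by
  simp [marginal, insert_eq_of_mem hx]

lemma Submodular.marginal_anti (hsub : Submodular V) (hV : Monotone V) (hST : S ⊆ T) :
    marginal V T x ≤ marginal V S x := by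
  by_cases hxT : x ∈ T
  · rw [marginal_of_mem hxT]
    exact marginal_nonneg hV
  · have h := hsub (insert x S) T
    rw [insert_union, union_eq_right.2 hST, insert_inter_of_notMem hxT,
      inter_eq_left.2 hST] at h
    unfold marginal
    linarith

lemma Submodular.le_add_sum_marginal (hsub : Submodular V) (hV : Monotone V) (S T : Finset ι) :
    V (S ∪ T) ≤ V S + ∑ x ∈ T, marginal V S x := by
  induction T using Finset.induction_on with
  | empty => simp
  | insert y T hy ih =>
    rw [sum_insert hy, union_insert]
    have := hsub.marginal_anti hV (subset_union_left (s₁ := S) (s₂ := T)) (x := y)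
    unfold marginal at *
    linarith

end Marginal

section Partition

variable {r s : ℕ} {M : Finset ι} {A : Fin r → Finset ι}

lemma IsPartition.subset (hA : IsPartition M A) (j : Fin r) : A j ⊆ M :=
  hA.2 ▸ subset_biUnion_of_mem A (mem_univ j)

lemma IsPartition.sum_eq {β : Type*} [AddCommMonoid β] (hA : IsPartition M A) (f : ι → β) :
    ∑ j, ∑ y ∈ A j, f y = ∑ y ∈ M, f y := by
  rw [← hA.2, sum_biUnion fun j _ k _ hjk => hA.1 j k hjk]

lemma isPartition_ite (M : Finset ι) (j₀ : Fin r) :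
    IsPartition M (fun j => if j = j₀ then M else ∅) := by
  refine ⟨fun j k hjk => ?_, ?_⟩
  · by_cases hj : j = j₀
    · simp [hj, Ne.symm (hj ▸ hjk)]
    · simp [hj]
  · ext y
    simp only [mem_biUnion, mem_univ, true_and]
    exact ⟨fun ⟨j, hj⟩ => by split_ifs at hj <;> simp_all, fun hy => ⟨j₀, by simpa⟩⟩

lemma IsPartition.erase (hA : IsPartition M A) (x : ι) :
    IsPartition (M.erase x) (fun j => (A j).erase x) :=
  ⟨fun j k hjk => (hA.1 j k hjk).mono (erase_subset x _) (erase_subset x _),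
    by rw [← erase_biUnion, hA.2]⟩

lemma IsPartition.coarsen (hA : IsPartition M A) (e : Fin r → Fin s) :
    IsPartition M (fun k => (univ.filter (e · = k)).biUnion A) := by
  refine ⟨fun k k' hkk' => ?_, ?_⟩
  · simp only [disjoint_biUnion_left, disjoint_biUnion_right, mem_filter, mem_univ, true_and]
    rintro j rfl j' rfl
    exact hA.1 _ _ (by rintro rfl; exact hkk' rfl)
  · rw [← hA.2]
    ext y
    simp

lemma IsPartition.insertNth {x : ι} (hA : IsPartition (M.erase x) A) (hx : x ∈ M)
    (i : Fin (r + 1)) : IsPartition M (i.insertNth {x} A) := by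
  have hxA : ∀ k, x ∉ A k := fun k h => notMem_erase x M (hA.subset k h)
  refine ⟨fun j k hjk => ?_, ?_⟩
  · rcases i.eq_self_or_eq_succAbove j with hj | ⟨j, rfl⟩ <;>
      rcases i.eq_self_or_eq_succAbove k with hk | ⟨k, rfl⟩
    · exact absurd (hj.trans hk.symm) hjk
    · simpa [hj] using hxA k
    · simpa [hk] using hxA j
    · simpa using hA.1 j k (by rintro rfl; exact hjk rfl)
  · rw [← insert_erase hx, ← hA.2]
    ext y
    simp [Fin.exists_iff_succAbove i]

end Partition

section MaximinShare

variable {r : ℕ} {M : Finset ι} {f : Finset ι → ℝ}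

lemma finite_setOf_iInf_of_isPartition (M : Finset ι) (f : Finset ι → ℝ) (r : ℕ) :
    {x : ℝ | ∃ A : Fin r → Finset ι, IsPartition M A ∧ x = ⨅ j, f (A j)}.Finite := by
  have hparts :
      {A : Fin r → Finset ι | IsPartition M A} ⊆ Set.univ.pi fun _ => ↑M.powerset :=
    fun A hA j _ => mem_coe.2 (mem_powerset.2 (IsPartition.subset hA j))
  refine (((Set.Finite.pi fun _ => M.powerset.finite_toSet).subset hparts).image
    fun A => ⨅ j, f (A j)).subset ?_
  rintro _ ⟨A, hA, rfl⟩
  exact ⟨A, hA, rfl⟩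

lemma iInf_le_MMS {A : Fin r → Finset ι} (hA : IsPartition M A) : ⨅ j, f (A j) ≤ MMS M f r :=
  le_csSup (finite_setOf_iInf_of_isPartition M f r).bddAbove ⟨A, hA, rfl⟩

lemma exists_isPartition_MMS_eq (hr : 0 < r) :
    ∃ A : Fin r → Finset ι, IsPartition M A ∧ MMS M f r = ⨅ j, f (A j) :=
  Set.Nonempty.csSup_mem
    (s := {x | ∃ A : Fin r → Finset ι, IsPartition M A ∧ x = ⨅ j, f (A j)})
    ⟨_, _, isPartition_ite M ⟨0, hr⟩, rfl⟩ (finite_setOf_iInf_of_isPartition M f r)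

lemma MMS_nonneg (hr : 0 < r) (hf : ∀ S, 0 ≤ f S) : 0 ≤ MMS M f r := by
  have : Nonempty (Fin r) := ⟨⟨0, hr⟩⟩
  exact (le_ciInf fun j => hf _).trans (iInf_le_MMS (isPartition_ite M ⟨0, hr⟩))

lemma MMS_le (hr : 0 < r) (hf : Monotone f) : MMS M f r ≤ f M := by
  obtain ⟨A, hA, hMMS⟩ := exists_isPartition_MMS_eq (M := M) (f := f) hr
  exact hMMS ▸ (ciInf_le (Set.finite_range _).bddBelow ⟨0, hr⟩).trans (hf (hA.subset _))

/-- The part containing `x` is merged into another part and `x` is then removed. -/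
lemma MMS_succ_le_MMS_erase (hr : 0 < r) (hf : Monotone f) {x : ι} (hx : x ∈ M) :
    MMS M f (r + 1) ≤ MMS (M.erase x) f r := by
  obtain ⟨P, hP, hMMS⟩ := exists_isPartition_MMS_eq (M := M) (f := f) r.succ_pos
  obtain ⟨j₀, hj₀⟩ : ∃ j, x ∈ P j := by simpa [← hP.2] using hx
  have : Nonempty (Fin r) := ⟨⟨0, hr⟩⟩
  set e := Function.invFun j₀.succAbove
  have hQ := (hP.coarsen e).erase x
  have hPQ : ∀ k, P (j₀.succAbove k) ⊆ ((univ.filter (e · = k)).biUnion P).erase x := by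
    intro k y hy
    refine mem_erase.2 ⟨?_, mem_biUnion.2 ⟨j₀.succAbove k, ?_, hy⟩⟩
    · rintro rfl
      exact disjoint_left.1 (hP.1 _ _ (j₀.succAbove_ne k)) hy hj₀
    · simpa using Function.leftInverse_invFun Fin.succAbove_right_injective k
  calc MMS M f (r + 1) = ⨅ j, f (P j) := hMMS
    _ ≤ ⨅ k, f (((univ.filter (e · = k)).biUnion P).erase x) :=
      le_ciInf fun k => (ciInf_le (Set.finite_range _).bddBelow _).trans (hf (hPQ k))
    _ ≤ MMS (M.erase x) f r := iInf_le_MMS hQ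

end MaximinShare

lemma sum_sum_range_sub_le {g : ℕ → ℝ} (hg : ∀ s, 0 ≤ g s) (n m : ℕ) :
    ∑ t ∈ (range m).filter (n ≤ ·), ∑ k ∈ range n, g (t - 1 - k) ≤
      n * ∑ s ∈ range m, g s := by
  rw [sum_comm]
  calc ∑ k ∈ range n, ∑ t ∈ (range m).filter (n ≤ ·), g (t - 1 - k)
      ≤ ∑ k ∈ range n, ∑ s ∈ range m, g s := sum_le_sum fun k hk => by
        have hinj : Set.InjOn (fun t => t - 1 - k) ↑((range m).filter (n ≤ ·)) := by
          intro t ht t' ht' h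
          simp only [coe_filter, mem_range, Set.mem_ofPred_eq] at ht ht' hk h
          omega
        rw [← sum_image hinj]
        refine sum_le_sum_of_subset_of_nonneg (fun s hs => ?_) fun s _ _ => hg s
        simp only [mem_image, mem_filter, mem_range] at hs ⊢
        omega
    _ = n * ∑ s ∈ range m, g s := by simp

lemma exists_lt_mod_eq_sub_sub {n i t : ℕ} (hi : i < n) (ht : n ≤ t) :
    ∃ k < n, (t - 1 - k) % n = i := by
  refine ⟨(t - 1 - i) % n, Nat.mod_lt _ (by omega), ?_⟩
  have := Nat.div_add_mod (t - 1 - i) n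
  have : t - 1 - (t - 1 - i) % n = n * ((t - 1 - i) / n) + i := by omega
  rw [this, Nat.mul_add_mod, Nat.mod_eq_of_lt hi]

section RoundRobin

variable {n : ℕ} (x : ℕ → ι)

/-- In round robin the item `x t` is picked at turn `t` by agent `t % n`; this is the bundle of
agent `j` after `t` turns. -/
def pickedBy (n j t : ℕ) : Finset ι := ((range t).filter (· % n = j)).image x

lemma pickedBy_zero (n j : ℕ) : pickedBy x n j 0 = ∅ := by
  simp [pickedBy]

lemma pickedBy_succ_of_mod_eq {j t : ℕ} (h : t % n = j) :
    pickedBy x n j (t + 1) = insert (x t) (pickedBy x n j t) := by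
  simp [pickedBy, range_add_one, filter_insert, h]

lemma pickedBy_mono (n j : ℕ) : Monotone (pickedBy x n j) :=
  fun _ _ h => image_subset_image (filter_subset_filter _ (range_subset_range.2 h))

lemma pickedBy_congr {x' : ℕ → ι} {t : ℕ} (h : ∀ s < t, x s = x' s) (n j : ℕ) :
    pickedBy x n j t = pickedBy x' n j t :=
  image_congr fun s hs => h s (mem_range.1 (mem_filter.1 hs).1)

def IsGreedyPick (V : Fin n → Finset ι → ℝ) (M : Finset ι) (t : ℕ) : Prop :=
  x t ∈ M \ (range t).image x ∧ ∀ j : Fin n, t % n = j → ∀ y ∈ M \ (range t).image x,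
    marginal (V j) (pickedBy x n j t) y ≤ marginal (V j) (pickedBy x n j t) (x t)

variable {x} {V : Fin n → Finset ι → ℝ} {M : Finset ι}

lemma isGreedyPick_congr {x' : ℕ → ι} {t : ℕ} (h : ∀ s ≤ t, x s = x' s) :
    IsGreedyPick x V M t ↔ IsGreedyPick x' V M t := by
  have hlt : ∀ s < t, x s = x' s := fun s hs => h s hs.le
  have himage : (range t).image x = (range t).image x' :=
    image_congr fun s hs => hlt s (mem_range.1 hs)
  simp only [IsGreedyPick, himage, pickedBy_congr x hlt, h t le_rfl]

lemma injOn_of_isGreedyPick {m : ℕ} (hx : ∀ t < m, IsGreedyPick x V M t) :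
    Set.InjOn x (range m) := by
  have key : ∀ s ∈ range m, ∀ t ∈ range m, s < t → x s ≠ x t := fun s _ t ht hst hxst =>
    (mem_sdiff.1 (hx t (mem_range.1 ht)).1).2 (mem_image.2 ⟨s, mem_range.2 hst, hxst⟩)
  intro s hs t ht hxst
  rcases lt_trichotomy s t with hst | rfl | hts
  · exact absurd hxst (key s hs t ht hst)
  · rfl
  · exact absurd hxst.symm (key t ht s hs hts)

lemma image_range_subset_of_isGreedyPick {m : ℕ} (hx : ∀ t < m, IsGreedyPick x V M t) :
    (range m).image x ⊆ M :=
  image_subset_iff.2 fun t ht => (mem_sdiff.1 (hx t (mem_range.1 ht)).1).1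

lemma exists_isGreedyPick (hn : 0 < n) (V : Fin n → Finset ι → ℝ) (hM : M.Nonempty) :
    ∀ m ≤ #M, ∃ x : ℕ → ι, ∀ t < m, IsGreedyPick x V M t := by
  intro m
  induction m with
  | zero =>
    obtain ⟨y, -⟩ := hM
    exact fun _ => ⟨fun _ => y, by simp⟩
  | succ m ih =>
    intro hm
    obtain ⟨x, hx⟩ := ih (by omega)
    have hrem : (M \ (range m).image x).Nonempty := by
      rw [← card_pos, card_sdiff_of_subset (image_range_subset_of_isGreedyPick hx),
        card_image_of_injOn (injOn_of_isGreedyPick hx), card_range]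
      omega
    let j : Fin n := ⟨m % n, Nat.mod_lt m hn⟩
    obtain ⟨y, hy, hymax⟩ := exists_max_image _ (marginal (V j) (pickedBy x n j m)) hrem
    have hagree : ∀ s < m, x s = Function.update x m y s :=
      fun s hs => (Function.update_of_ne hs.ne _ _).symm
    refine ⟨Function.update x m y, fun t ht => ?_⟩
    rcases (Nat.lt_succ_iff.1 ht).lt_or_eq with ht | rfl
    · exact (isGreedyPick_congr fun s hs => hagree s (hs.trans_lt ht)).1 (hx t ht)
    · have himage : (range t).image x = (range t).image (Function.update x t y) :=
        image_congr fun s hs => hagree s (mem_range.1 hs)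
      simp only [IsGreedyPick, ← himage, ← pickedBy_congr x hagree, Function.update_self]
      refine ⟨hy, fun j' hj' => ?_⟩
      obtain rfl : j' = j := Fin.ext hj'.symm
      exact hymax

lemma image_range_card_eq_of_isGreedyPick (hx : ∀ t < #M, IsGreedyPick x V M t) :
    (range #M).image x = M :=
  eq_of_subset_of_card_le (image_range_subset_of_isGreedyPick hx) <| by
    rw [card_image_of_injOn (injOn_of_isGreedyPick hx), card_range]

lemma isPartition_pickedBy (hn : 0 < n) (hx : ∀ t < #M, IsGreedyPick x V M t) :
    IsPartition M fun j : Fin n => pickedBy x n j #M := by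
  refine ⟨fun j k hjk => ?_, ?_⟩
  · simp only [disjoint_left, pickedBy, mem_image, mem_filter, mem_range]
    rintro _ ⟨s, ⟨hs, hsj⟩, rfl⟩ ⟨t, ⟨ht, htk⟩, hts⟩
    obtain rfl := injOn_of_isGreedyPick hx (mem_range.2 ht) (mem_range.2 hs) hts
    exact hjk (Fin.ext (hsj.symm.trans htk))
  · refine Eq.trans ?_ (image_range_card_eq_of_isGreedyPick hx)
    ext y
    simp only [pickedBy, mem_biUnion, mem_univ, true_and, mem_image, mem_filter, mem_range]
    exact ⟨fun ⟨_, t, ⟨ht, _⟩, hty⟩ => ⟨t, ht, hty⟩,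
      fun ⟨t, ht, hty⟩ => ⟨⟨t % n, Nat.mod_lt t hn⟩, t, ⟨ht, rfl⟩, hty⟩⟩

/-- The item `x t` was still available at turn `s`, when agent `i` picked greedily. -/
lemma marginal_pickedBy_le_of_lt {m : ℕ} (hx : ∀ t < m, IsGreedyPick x V M t) {i : Fin n}
    (hV : Monotone (V i)) (hsub : Submodular (V i)) {s t : ℕ} (hs : s % n = i) (hst : s < t)
    (htm : t < m) :
    marginal (V i) (pickedBy x n i m) (x t) ≤
      V i (pickedBy x n i (s + 1)) - V i (pickedBy x n i s) := by
  have hxt : x t ∈ M \ (range s).image x := by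
    obtain ⟨hM, hnew⟩ := mem_sdiff.1 (hx t htm).1
    exact mem_sdiff.2 ⟨hM, fun h => hnew (image_subset_image (range_subset_range.2 hst.le) h)⟩
  calc marginal (V i) (pickedBy x n i m) (x t)
      ≤ marginal (V i) (pickedBy x n i s) (x t) :=
        hsub.marginal_anti hV (pickedBy_mono x n i (hst.trans htm).le)
    _ ≤ marginal (V i) (pickedBy x n i s) (x s) := (hx s (hst.trans htm)).2 i hs _ hxt
    _ = _ := by rw [marginal, pickedBy_succ_of_mod_eq x hs]

/-- The first `n` items are bounded by their singleton values; every later item by the gain of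
agent `i` at her last turn before it, and each such gain is charged at most `n` times. -/
lemma sum_marginal_pickedBy_le (hx : ∀ t < #M, IsGreedyPick x V M t) {i : Fin n}
    (hV : Monotone (V i)) (hsub : Submodular (V i)) (h0 : 0 ≤ V i ∅) {c : ℝ} (hc : 0 ≤ c)
    (hsmall : ∀ y ∈ M, V i {y} ≤ c) :
    ∑ y ∈ M, marginal (V i) (pickedBy x n i #M) y ≤ n * c + n * V i (pickedBy x n i #M) := by
  set S := pickedBy x n i #M
  set g : ℕ → ℝ := fun s => V i (pickedBy x n i (s + 1)) - V i (pickedBy x n i s)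
  have hg : ∀ s, 0 ≤ g s := fun s => sub_nonneg.2 (hV (pickedBy_mono x n i s.le_succ))
  have hgsum : ∑ s ∈ range #M, g s = V i S - V i ∅ := by
    rw [sum_range_sub (fun s => V i (pickedBy x n i s)), pickedBy_zero]
  have hearly : ∀ t ∈ (range #M).filter (· < n), marginal (V i) S (x t) ≤ c := fun t ht =>
    calc marginal (V i) S (x t) ≤ marginal (V i) ∅ (x t) :=
          hsub.marginal_anti hV (empty_subset _)
      _ ≤ c := by
        have := hsmall _ (mem_sdiff.1 (hx t (mem_range.1 (mem_filter.1 ht).1)).1).1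
        rw [marginal, insert_empty]
        linarith
  have hlate : ∀ t ∈ (range #M).filter (n ≤ ·),
      marginal (V i) S (x t) ≤ ∑ k ∈ range n, g (t - 1 - k) := by
    intro t ht
    simp only [mem_filter, mem_range] at ht
    obtain ⟨k, hk, hki⟩ := exists_lt_mod_eq_sub_sub i.isLt ht.2
    exact (marginal_pickedBy_le_of_lt hx hV hsub hki (by omega) ht.1).trans
      (single_le_sum (fun k _ => hg _) (mem_range.2 hk))
  have hcard : #((range #M).filter (· < n)) ≤ n :=
    (card_le_card fun t ht => mem_range.2 (mem_filter.1 ht).2).trans (card_range n).le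
  calc ∑ y ∈ M, marginal (V i) S y = ∑ t ∈ range #M, marginal (V i) S (x t) := by
        conv_lhs => rw [← image_range_card_eq_of_isGreedyPick hx]
        exact sum_image (injOn_of_isGreedyPick hx)
    _ = ∑ t ∈ (range #M).filter (· < n), marginal (V i) S (x t) +
        ∑ t ∈ (range #M).filter (n ≤ ·), marginal (V i) S (x t) := by
        rw [← sum_filter_add_sum_filter_not _ (· < n)]
        simp only [not_lt]
    _ ≤ #((range #M).filter (· < n)) • c + n * ∑ s ∈ range #M, g s :=
        add_le_add (sum_le_card_nsmul _ _ c hearly)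
          ((sum_le_sum hlate).trans (sum_sum_range_sub_le hg n #M))
    _ ≤ n * c + n * V i S := by
        rw [nsmul_eq_mul, hgsum]
        gcongr
        linarith

lemma MMS_div_three_le_pickedBy (hn : 0 < n) (hx : ∀ t < #M, IsGreedyPick x V M t)
    {i : Fin n} (hV : Monotone (V i)) (hsub : Submodular (V i)) (hnonneg : ∀ S, 0 ≤ V i S)
    (hsmall : ∀ y ∈ M, V i {y} ≤ MMS M (V i) n / 3) :
    MMS M (V i) n / 3 ≤ V i (pickedBy x n i #M) := by
  set μ := MMS M (V i) n
  set S := pickedBy x n i #M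
  obtain ⟨P, hP, hμ⟩ := exists_isPartition_MMS_eq (M := M) (f := V i) hn
  have hpart : ∀ j, μ ≤ V i S + ∑ y ∈ P j, marginal (V i) S y := fun j =>
    calc μ ≤ V i (P j) := hμ.le.trans (ciInf_le (Set.finite_range _).bddBelow j)
      _ ≤ V i (S ∪ P j) := hV subset_union_right
      _ ≤ _ := hsub.le_add_sum_marginal hV S (P j)
  have hsum := sum_le_sum fun j (_ : j ∈ univ) => hpart j
  rw [sum_add_distrib, hP.sum_eq, sum_const, sum_const, card_univ, Fintype.card_fin,
    nsmul_eq_mul, nsmul_eq_mul] at hsum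
  have hbound := sum_marginal_pickedBy_le hx hV hsub (hnonneg ∅)
    (div_nonneg (MMS_nonneg hn hnonneg) zero_le_three) hsmall
  have : (n : ℝ) * (μ / 3) ≤ n * V i S := by linarith
  exact le_of_mul_le_mul_left this (by exact_mod_cast hn)

end RoundRobin

section Allocation

variable {n : ℕ} {M : Finset ι} {V : Fin n → Finset ι → ℝ}

lemma exists_allocation_of_singleton_le (hn : 0 < n) (hV : ∀ i, Monotone (V i))
    (hsub : ∀ i, Submodular (V i)) (hnonneg : ∀ i S, 0 ≤ V i S)
    (hsmall : ∀ i, ∀ y ∈ M, V i {y} ≤ MMS M (V i) n / 3) :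
    ∃ A : Fin n → Finset ι, IsPartition M A ∧ ∀ i, MMS M (V i) n / 3 ≤ V i (A i) := by
  rcases M.eq_empty_or_nonempty with rfl | hM
  · refine ⟨_, isPartition_ite ∅ ⟨0, hn⟩, fun i => ?_⟩
    have := MMS_nonneg (M := ∅) hn (hnonneg i)
    have := MMS_le (M := ∅) hn (hV i)
    simp only [ite_self]
    linarith
  obtain ⟨x, hx⟩ := exists_isGreedyPick hn V hM #M le_rfl
  exact ⟨_, isPartition_pickedBy hn hx, fun i =>
    MMS_div_three_le_pickedBy hn hx (hV i) (hsub i) (hnonneg i) (hsmall i)⟩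

theorem exists_allocation_MMS_div_three_le (hn : 1 ≤ n) (M : Finset ι)
    (V : Fin n → Finset ι → ℝ) (hV : ∀ i, Monotone (V i)) (hsub : ∀ i, Submodular (V i))
    (hnonneg : ∀ i S, 0 ≤ V i S) :
    ∃ A : Fin n → Finset ι, IsPartition M A ∧ ∀ i, MMS M (V i) n / 3 ≤ V i (A i) := by
  induction n, hn using Nat.le_induction generalizing M with
  | base =>
    refine ⟨_, isPartition_ite M 0, fun i => ?_⟩
    obtain rfl := Subsingleton.elim i 0
    have := MMS_nonneg (M := M) one_pos (hnonneg 0)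
    have := MMS_le (M := M) one_pos (hV 0)
    simp only [if_true]
    linarith
  | succ n hn ih =>
    by_cases hbig : ∃ i, ∃ y ∈ M, MMS M (V i) (n + 1) / 3 ≤ V i {y}
    · obtain ⟨i, y, hy, hyi⟩ := hbig
      obtain ⟨A, hA, hAV⟩ := ih (M.erase y) (fun k => V (i.succAbove k))
        (fun k => hV _) (fun k => hsub _) (fun k => hnonneg _)
      refine ⟨i.insertNth {y} A, hA.insertNth hy i,
        (Fin.forall_iff_succAbove i).2 ⟨?_, fun k => ?_⟩⟩
      · simpa using hyi
      · have := MMS_succ_le_MMS_erase hn (hV (i.succAbove k)) hy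
        have := hAV k
        simp only [Fin.insertNth_apply_succAbove]
        linarith
    · push Not at hbig
      exact exists_allocation_of_singleton_le n.succ_pos hV hsub hnonneg
        fun i y hy => (hbig i y hy).le

end Allocation

end

theorem exists_one_third_MMS_allocation_submodular_general {ι : Type*} [Fintype ι] [DecidableEq ι]
    {n : ℕ} (hn : 1 ≤ n) (V : Fin n → Finset ι → ℝ)
    (hnonneg : ∀ i (S : Finset ι), 0 ≤ V i S)
    (hmono : ∀ i, ∀ S T : Finset ι, S ⊆ T → V i S ≤ V i T)
    (hsubm : ∀ i, Submodular (V i)) :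
    ∃ A : Fin n → Finset ι, IsPartition (Finset.univ : Finset ι) A ∧
      ∀ i, (1 / 3 : ℝ) * MMS Finset.univ (V i) n ≤ V i (A i) := by
  simp only [one_div_mul_eq_div]
  exact exists_allocation_MMS_div_three_le hn univ V (fun i _ _ => hmono i _ _) hsubm hnonneg

/-- For any number `n ≥ 1` of agents with monotone, nonnegative, normalized submodular
valuations, there is an allocation giving every agent at least `1/3` of her maximin share. -/
theorem exists_one_third_MMS_allocation_submodular {ι : Type*} [Fintype ι] [DecidableEq ι]
    {n : ℕ} (hn : 1 ≤ n) (V : Fin n → Finset ι → ℝ)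
    (hzero : ∀ i, V i ∅ = 0)
    (hnonneg : ∀ i (S : Finset ι), 0 ≤ V i S)
    (hmono : ∀ i, ∀ S T : Finset ι, S ⊆ T → V i S ≤ V i T)
    (hsubm : ∀ i, Submodular (V i)) :
    ∃ A : Fin n → Finset ι, IsPartition (Finset.univ : Finset ι) A ∧
      ∀ i, (1 / 3 : ℝ) * MMS Finset.univ (V i) n ≤ V i (A i) :=
  exists_one_third_MMS_allocation_submodular_general hn V hnonneg hmono hsubm
end

section
/- For every integer n ≥ 2 there exist a finite set M of items with |M| = 2n and monotone submodular valuations V_1, …, V_n on subsets of M, each nonnegative with V_i(∅) = 0, such that MMS_{V_i}^n(M) = 2 for every agent i, and yet for every allocation A_1, …, A_n of M there exists some agent i with V_i(A_i) ≤ 3/2, i.e., with V_i(A_i) ≤ (3/4) · MMS_{V_i}^n(M). -/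
section myV
variable {α : Type} [DecidableEq α] [AddCommMonoid α]

/-- Auxiliary valuation: value `0 / 1 / (2 or 3/2) / 2` according to cardinality
`0 / 1 / 2 / ≥ 3`; a pair is worth `2` iff its sum equals the target `s`, else `3/2`. -/
noncomputable def myV (s : α) (S : Finset α) : ℝ :=
  if S.card ≤ 1 then (S.card : ℝ)
  else if S.card = 2 ∧ S.sum id = s then 2
  else if S.card = 2 then 3/2 else 2

lemma myV_nonneg (s : α) (S : Finset α) : 0 ≤ myV s S := by
  unfold myV; split_ifs <;> positivity

lemma myV_le_two (s : α) (S : Finset α) : myV s S ≤ 2 := by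
  unfold myV; split_ifs with h
  · have : (S.card : ℝ) ≤ 1 := by exact_mod_cast h
    linarith
  · norm_num
  · norm_num
  · norm_num

lemma myV_empty (s : α) : myV s (∅ : Finset α) = 0 := by simp [myV]

lemma myV_card_le_one (s : α) {S : Finset α} (h : S.card ≤ 1) :
    myV s S = (S.card : ℝ) := by simp [myV, h]

lemma myV_card_two_good (s : α) {S : Finset α} (h : S.card = 2) (hs : S.sum id = s) :
    myV s S = 2 := by
  unfold myV; rw [if_neg (by omega), if_pos ⟨h, hs⟩]

lemma myV_card_two_bad (s : α) {S : Finset α} (h : S.card = 2) (hs : S.sum id ≠ s) :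
    myV s S = 3/2 := by
  unfold myV; rw [if_neg (by omega), if_neg (by tauto), if_pos h]

lemma myV_card_ge_three (s : α) {S : Finset α} (h : 3 ≤ S.card) :
    myV s S = 2 := by
  unfold myV; split_ifs with h1 h2 h3 <;> first | omega | rfl | (exfalso; omega)

lemma one_le_myV (s : α) {S : Finset α} (h : 1 ≤ S.card) : 1 ≤ myV s S := by
  unfold myV; split_ifs with h1 h2 h3
  · have : S.card = 1 := by omega
    rw [this]; norm_num
  · norm_num
  · norm_num
  · norm_num

lemma three_half_le_myV (s : α) {S : Finset α} (h : 2 ≤ S.card) : 3/2 ≤ myV s S := by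
  unfold myV; split_ifs with h1 h2 h3 <;> first | omega | norm_num

lemma myV_mono (s : α) {S T : Finset α} (h : S ⊆ T) : myV s S ≤ myV s T := by
  rcases Nat.lt_or_ge S.card 2 with h1 | h1
  · rcases Nat.lt_or_ge S.card 1 with h0 | h0
    · have : S = ∅ := Finset.card_eq_zero.mp (by omega)
      rw [this, myV_empty]; exact myV_nonneg s T
    · have hS : S.card = 1 := by omega
      rw [myV_card_le_one s (by omega), hS]
      have : 1 ≤ T.card := le_trans h0 (Finset.card_le_card h)
      simpa using one_le_myV s this
  · rcases Nat.lt_or_ge T.card 3 with h2 | h2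
    · have hT : T.card = 2 := by
        have := Finset.card_le_card h; omega
      have : S = T := Finset.eq_of_subset_of_card_le h (by omega)
      rw [this]
    · rw [myV_card_ge_three s h2]; exact myV_le_two s S

lemma myV_submodular (s : α) (A B : Finset α) :
    myV s (A ∪ B) + myV s (A ∩ B) ≤ myV s A + myV s B := by
  by_cases hAB : A ⊆ B
  · rw [Finset.union_eq_right.mpr hAB, Finset.inter_eq_left.mpr hAB]
    linarith
  · by_cases hBA : B ⊆ A
    · rw [Finset.union_eq_left.mpr hBA, Finset.inter_eq_right.mpr hBA]
    · have hcA : (A ∩ B).card < A.card := by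
        apply Finset.card_lt_card
        constructor
        · exact Finset.inter_subset_left
        · intro hsub
          exact hAB (fun x hx => Finset.mem_of_mem_inter_right (hsub hx))
      have hcB : (A ∩ B).card < B.card := by
        apply Finset.card_lt_card
        constructor
        · exact Finset.inter_subset_right
        · intro hsub
          exact hBA (fun x hx => Finset.mem_of_mem_inter_left (hsub hx))
      rcases Nat.lt_or_ge (A ∩ B).card 2 with h2 | h2
      · rcases Nat.lt_or_ge (A ∩ B).card 1 with h0 | h0
        · have he : A ∩ B = ∅ := Finset.card_eq_zero.mp (by omega)
          rw [he, myV_empty]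
          have h1A : 1 ≤ myV s A := one_le_myV s (by omega)
          have h1B : 1 ≤ myV s B := one_le_myV s (by omega)
          have := myV_le_two s (A ∪ B)
          linarith
        · have : myV s (A ∩ B) = 1 := by
            rw [myV_card_le_one s (by omega)]
            have : (A ∩ B).card = 1 := by omega
            rw [this]; norm_num
          rw [this]
          have h1A : 3/2 ≤ myV s A := three_half_le_myV s (by omega)
          have h1B : 3/2 ≤ myV s B := three_half_le_myV s (by omega)
          have := myV_le_two s (A ∪ B)
          linarith
      · have hA3 : myV s A = 2 := myV_card_ge_three s (by omega)
        have hB3 : myV s B = 2 := myV_card_ge_three s (by omega)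
        have := myV_le_two s (A ∪ B)
        have := myV_le_two s (A ∩ B)
        linarith

end myV

/-- Casts of naturals to `ZMod (2*n)` preserve parity. -/
lemma cast_parity {n : ℕ} {a b : ℕ} (h : (a : ZMod (2*n)) = (b : ZMod (2*n))) :
    a % 2 = b % 2 := by
  have hm : a ≡ b [MOD 2*n] := (ZMod.natCast_eq_natCast_iff _ _ _).mp h
  have hd : ((2*n : ℕ) : ℤ) ∣ (b : ℤ) - (a : ℤ) := hm.dvd
  have h2 : (2 : ℤ) ∣ (b : ℤ) - (a : ℤ) :=
    dvd_trans ⟨(n : ℤ), by push_cast; ring⟩ hd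
  omega

lemma cast_inj_small {n : ℕ} {a b : ℕ} (ha : a < 2*n) (hb : b < 2*n)
    (h : (a : ZMod (2*n)) = (b : ZMod (2*n))) : a = b := by
  have hm : a ≡ b [MOD 2*n] := (ZMod.natCast_eq_natCast_iff _ _ _).mp h
  have : a % (2*n) = b % (2*n) := hm
  rwa [Nat.mod_eq_of_lt ha, Nat.mod_eq_of_lt hb] at this

lemma cast_inj_2 {n : ℕ} (hn : 2 ≤ n)
    (h : ((n : ℕ) : ZMod (2*n)) = ((n + 2 : ℕ) : ZMod (2*n))) : False := by
  have hm := (ZMod.natCast_eq_natCast_iff _ _ _).mp h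
  have hd : ((2*n : ℕ) : ℤ) ∣ ((n+2 : ℕ) : ℤ) - ((n : ℕ) : ℤ) := hm.dvd
  have h2 : ((n+2 : ℕ) : ℤ) - ((n : ℕ) : ℤ) = 2 := by push_cast; ring
  rw [h2] at hd
  have h3 := Int.le_of_dvd (by norm_num) hd
  have : 2*n ≤ 2 := by exact_mod_cast h3
  omega

/-- The even representative `2j` in `ZMod (2n)`. -/
def GPx (n : ℕ) (j : Fin n) : ZMod (2*n) := ((2*(j:ℕ) : ℕ) : ZMod (2*n))

/-- The pair `{2j, c - 2j}` in `ZMod (2n)`. -/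
def GP (n c : ℕ) (j : Fin n) : Finset (ZMod (2*n)) :=
  {GPx n j, (c : ZMod (2*n)) - GPx n j}

lemma GPx_add_GPx_ne (n : ℕ) {c : ℕ} (hc : c % 2 = 1) (j k : Fin n) :
    GPx n j + GPx n k ≠ (c : ZMod (2*n)) := by
  intro h
  have h' : ((2*(j:ℕ) + 2*(k:ℕ) : ℕ) : ZMod (2*n)) = (c : ZMod (2*n)) := by
    rw [← h]; unfold GPx; push_cast; ring
  have := cast_parity h'
  omega

lemma GPx_ne_sub (n : ℕ) {c : ℕ} (hc : c % 2 = 1) (j k : Fin n) :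
    GPx n j ≠ (c : ZMod (2*n)) - GPx n k := by
  intro h
  exact GPx_add_GPx_ne n hc j k (eq_sub_iff_add_eq.mp h)

lemma GPx_inj (n : ℕ) {j k : Fin n} (h : GPx n j = GPx n k) : j = k := by
  have := cast_inj_small (a := 2*(j:ℕ)) (b := 2*(k:ℕ))
    (by have := j.isLt; omega) (by have := k.isLt; omega) h
  exact Fin.ext (by omega)

lemma GP_card (n : ℕ) {c : ℕ} (hc : c % 2 = 1) (j : Fin n) : (GP n c j).card = 2 :=
  Finset.card_pair (GPx_ne_sub n hc j j)

lemma GP_sum (n : ℕ) {c : ℕ} (hc : c % 2 = 1) (j : Fin n) :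
    (GP n c j).sum id = (c : ZMod (2*n)) := by
  rw [GP, Finset.sum_pair (GPx_ne_sub n hc j j)]
  simp only [id]
  ring

lemma GP_disjoint (n : ℕ) {c : ℕ} (hc : c % 2 = 1) {j k : Fin n} (hjk : j ≠ k) :
    Disjoint (GP n c j) (GP n c k) := by
  rw [Finset.disjoint_left]
  intro v hv hv'
  rw [GP, Finset.mem_insert, Finset.mem_singleton] at hv hv'
  rcases hv with h1 | h1 <;> rcases hv' with h2 | h2
  · exact hjk (GPx_inj n (h1 ▸ h2 ▸ rfl))
  · exact GPx_ne_sub n hc j k (h1 ▸ h2 ▸ rfl)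
  · exact GPx_ne_sub n hc k j (h2 ▸ h1 ▸ rfl)
  · have : (c : ZMod (2*n)) - GPx n j = (c : ZMod (2*n)) - GPx n k := h1 ▸ h2 ▸ rfl
    exact hjk (GPx_inj n (sub_right_inj.mp this))

lemma GP_biUnion (n : ℕ) [NeZero (2*n)] (hn : 2 ≤ n) {c : ℕ} (hc : c % 2 = 1) :
    Finset.univ.biUnion (GP n c) = (Finset.univ : Finset (ZMod (2*n))) := by
  apply Finset.eq_of_subset_of_card_le (Finset.subset_univ _)
  rw [Finset.card_biUnion (fun j _ k _ hjk => GP_disjoint n hc hjk)]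
  have : ∀ j ∈ (Finset.univ : Finset (Fin n)), (GP n c j).card = 2 :=
    fun j _ => GP_card n hc j
  rw [Finset.sum_congr rfl this]
  simp [Finset.card_univ, ZMod.card, mul_comm]

/-- For every `n ≥ 2` there is an instance with `2n` items and `n` monotone, nonnegative,
normalized submodular agents, each with maximin share `2`, in which every allocation gives
some agent value at most `3/2`, i.e. at most `3/4` of her maximin share. -/
theorem submodular_three_quarters_upper_bound (n : ℕ) (hn : 2 ≤ n) :
    ∃ (ι : Type) (instF : Fintype ι) (instD : DecidableEq ι) (V : Fin n → Finset ι → ℝ),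
      Fintype.card ι = 2 * n ∧
      (∀ i (S : Finset ι), 0 ≤ V i S) ∧
      (∀ i, V i ∅ = 0) ∧
      (∀ i, ∀ S T : Finset ι, S ⊆ T → V i S ≤ V i T) ∧
      (∀ i, Submodular (V i)) ∧
      (∀ i, MMS Finset.univ (V i) n = 2) ∧
      (∀ A : Fin n → Finset ι, IsPartition (Finset.univ : Finset ι) A →
        ∃ i, V i (A i) ≤ 3 / 2) := by
  haveI : NeZero (2*n) := ⟨by omega⟩
  haveI : NeZero n := ⟨by omega⟩
  set cfun : Fin n → ℕ := fun i => if i = 0 then 3 else 1 with hcfun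
  have hodd : ∀ i, cfun i % 2 = 1 := by
    intro i; simp only [hcfun]; split_ifs <;> rfl
  refine ⟨ZMod (2*n), inferInstance, inferInstance,
    fun i => myV ((cfun i : ℕ) : ZMod (2*n)), ZMod.card (2*n),
    fun i S => myV_nonneg _ _, fun i => myV_empty _,
    fun i S T h => myV_mono _ h, fun i A B => myV_submodular _ A B, ?_, ?_⟩
  · -- each agent's maximin share equals 2
    intro i
    have hub : ∀ x ∈ { x : ℝ | ∃ A : Fin n → Finset (ZMod (2*n)),
        IsPartition Finset.univ A ∧ x = ⨅ j, myV ((cfun i : ℕ) : ZMod (2*n)) (A j) }, x ≤ 2 := by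
      rintro x ⟨A, hA, rfl⟩
      have hbdd : BddBelow (Set.range fun j => myV ((cfun i : ℕ) : ZMod (2*n)) (A j)) :=
        ⟨0, by rintro y ⟨j, rfl⟩; exact myV_nonneg _ _⟩
      exact le_trans (ciInf_le hbdd (0 : Fin n)) (myV_le_two _ _)
    have hmem : (2:ℝ) ∈ { x : ℝ | ∃ A : Fin n → Finset (ZMod (2*n)),
        IsPartition Finset.univ A ∧ x = ⨅ j, myV ((cfun i : ℕ) : ZMod (2*n)) (A j) } := by
      refine ⟨GP n (cfun i),
        ⟨fun j k hjk => GP_disjoint n (hodd i) hjk, GP_biUnion n hn (hodd i)⟩, ?_⟩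
      have hval : ∀ j, myV ((cfun i : ℕ) : ZMod (2*n)) (GP n (cfun i) j) = 2 :=
        fun j => myV_card_two_good _ (GP_card n (hodd i) j) (GP_sum n (hodd i) j)
      rw [iInf_congr hval]
      exact (ciInf_const).symm
    exact le_antisymm (Real.sSup_le hub (by norm_num)) (le_csSup ⟨2, hub⟩ hmem)
  · -- every allocation gives some agent at most 3/2
    intro A hA
    by_contra hcon
    push_neg at hcon
    have hdisj := hA.1
    have hU := hA.2
    have hcards : ∑ i : Fin n, (A i).card = 2*n := by
      rw [← Finset.card_biUnion (fun i _ j _ hij => hdisj i j hij), hU]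
      simp [Finset.card_univ, ZMod.card]
    have h2le : ∀ i, 2 ≤ (A i).card := by
      intro i
      by_contra h
      push_neg at h
      have h1 : (A i).card ≤ 1 := by omega
      have heq := myV_card_le_one ((cfun i : ℕ) : ZMod (2*n)) h1
      have hlt := hcon i
      rw [heq] at hlt
      have : ((A i).card : ℝ) ≤ 1 := by exact_mod_cast h1
      linarith
    have hc2 : ∀ i, (A i).card = 2 := by
      by_contra h
      push_neg at h
      obtain ⟨i0, hi0⟩ := h
      have hlt : ∑ _i : Fin n, 2 < ∑ i : Fin n, (A i).card :=
        Finset.sum_lt_sum (fun i _ => h2le i)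
          ⟨i0, Finset.mem_univ _, by have := h2le i0; omega⟩
      simp only [Finset.sum_const, Finset.card_univ, Fintype.card_fin, smul_eq_mul] at hlt
      omega
    have hsums : ∀ i, (A i).sum id = ((cfun i : ℕ) : ZMod (2*n)) := by
      intro i
      by_contra hne
      have heq := myV_card_two_bad _ (hc2 i) hne
      have hlt := hcon i
      rw [heq] at hlt
      linarith
    have hTA : (Finset.univ : Finset (ZMod (2*n))).sum id = ∑ i : Fin n, (A i).sum id := by
      rw [← hU, Finset.sum_biUnion (fun i _ j _ hij => hdisj i j hij)]
    have hT1 : (Finset.univ : Finset (ZMod (2*n))).sum id = ((n : ℕ) : ZMod (2*n)) := by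
      rw [← GP_biUnion n hn (show (1:ℕ) % 2 = 1 from rfl),
        Finset.sum_biUnion (fun j _ k _ hjk => GP_disjoint n (show (1:ℕ) % 2 = 1 from rfl) hjk)]
      have : ∀ j ∈ (Finset.univ : Finset (Fin n)),
          (GP n 1 j).sum id = ((1:ℕ) : ZMod (2*n)) :=
        fun j _ => GP_sum n (show (1:ℕ) % 2 = 1 from rfl) j
      rw [Finset.sum_congr rfl this]
      simp
    have hcsum : ∑ i : Fin n, cfun i = n + 2 := by
      have hstep : ∀ i : Fin n, cfun i = 1 + if i = 0 then 2 else 0 := by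
        intro i; simp only [hcfun]; split_ifs <;> rfl
      rw [Finset.sum_congr rfl (fun i _ => hstep i), Finset.sum_add_distrib]
      simp [Finset.sum_ite_eq', Finset.card_univ]
    apply cast_inj_2 hn
    rw [← hT1, hTA, Finset.sum_congr rfl (fun i _ => hsums i), ← Nat.cast_sum, hcsum]
end

section
/- For every integer n ≥ 2 there exist a finite set M of items with |M| = 2n and XOS valuations V_1, …, V_n on subsets of M such that MMS_{V_i}^n(M) = 2 for every agent i, and yet for every allocation A_1, …, A_n of M there exists some agent i with V_i(A_i) ≤ 1, i.e., with V_i(A_i) ≤ (1/2) · MMS_{V_i}^n(M). -/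
/-- A valuation is XOS (fractionally subadditive) if it is the pointwise maximum of a
nonempty finite family of additive valuations given by nonnegative weights. -/
def IsXOS {ι : Type*} (V : Finset ι → ℝ) : Prop :=
  ∃ (k : ℕ) (w : Fin (k + 1) → ι → ℝ), (∀ i b, 0 ≤ w i b) ∧
    ∀ S : Finset ι, V S = Finset.univ.sup' Finset.univ_nonempty (fun i => ∑ b ∈ S, w i b)

/-- For every `n ≥ 2` there is an instance with `2n` items and `n` XOS agents, each with
maximin share `2`, in which every allocation gives some agent value at most `1`, i.e. at
most `1/2` of her maximin share. -/
theorem xos_one_half_upper_bound (n : ℕ) (hn : 2 ≤ n) :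
    ∃ (ι : Type) (instF : Fintype ι) (instD : DecidableEq ι) (V : Fin n → Finset ι → ℝ),
      Fintype.card ι = 2 * n ∧
      (∀ i, IsXOS (V i)) ∧
      (∀ i, MMS Finset.univ (V i) n = 2) ∧
      (∀ A : Fin n → Finset ι, IsPartition (Finset.univ : Finset ι) A →
        ∃ i, V i (A i) ≤ 1) := by
  haveI : NeZero n := ⟨by omega⟩
  classical
  -- offset: agent 0 uses a shifted matching, all others the identity matching
  set o : Fin n → Fin n := fun i => if i = 0 then 1 else 0 with ho
  set w : Fin n → Fin n → (Fin n × Bool) → ℝ := fun i j b =>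
    (if b = (j, false) then 1 else 0) + (if b = (j + o i, true) then 1 else 0) with hw
  have hne : (Finset.univ : Finset (Fin n)).Nonempty := Finset.univ_nonempty
  set V : Fin n → Finset (Fin n × Bool) → ℝ := fun i S =>
    Finset.univ.sup' hne (fun j => ∑ b ∈ S, w i j b) with hV
  have hwnn : ∀ i j b, 0 ≤ w i j b := by
    intro i j b
    simp only [hw]
    split_ifs <;> norm_num
  have hsum : ∀ i j (S : Finset (Fin n × Bool)), ∑ b ∈ S, w i j b =
      (if ((j, false) : Fin n × Bool) ∈ S then (1:ℝ) else 0) +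
      (if ((j + o i, true) : Fin n × Bool) ∈ S then (1:ℝ) else 0) := by
    intro i j S
    simp only [hw, Finset.sum_add_distrib, Finset.sum_ite_eq' S]
  have hsum_le : ∀ i j (S : Finset (Fin n × Bool)), ∑ b ∈ S, w i j b ≤ 2 := by
    intro i j S
    rw [hsum]
    split_ifs <;> norm_num
  have hV_le : ∀ i S, V i S ≤ 2 := by
    intro i S
    exact Finset.sup'_le _ _ fun j _ => hsum_le i j S
  refine ⟨Fin n × Bool, inferInstance, inferInstance, V, ?_, ?_, ?_, ?_⟩
  · simp [Fintype.card_prod]; omega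
  · -- XOS
    intro i
    have hcast : n - 1 + 1 = n := by omega
    refine ⟨n - 1, fun t => w i (Fin.cast hcast t), fun t b => hwnn i _ b, fun S => ?_⟩
    apply le_antisymm
    · apply Finset.sup'_le
      intro j _
      have hj : Fin.cast hcast (Fin.cast hcast.symm j) = j := by
        apply Fin.ext; simp
      have := Finset.le_sup' (f := fun t : Fin (n - 1 + 1) => ∑ b ∈ S, w i (Fin.cast hcast t) b)
        (Finset.mem_univ (Fin.cast hcast.symm j))
      rwa [hj] at this
    · apply Finset.sup'_le
      intro t _
      exact Finset.le_sup' (f := fun j => ∑ b ∈ S, w i j b) (Finset.mem_univ (Fin.cast hcast t))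
  · -- MMS = 2
    intro i
    set P : Fin n → Finset (Fin n × Bool) := fun j => {(j, false), (j + o i, true)} with hP
    have hPart : IsPartition (Finset.univ : Finset (Fin n × Bool)) P := by
      constructor
      · intro j j' hjj'
        rw [Finset.disjoint_left]
        intro x hx hx'
        simp only [hP, Finset.mem_insert, Finset.mem_singleton] at hx hx'
        rcases hx with rfl | rfl <;> rcases hx' with h | h <;>
          simp_all [Prod.ext_iff]
      · ext ⟨x1, x2⟩
        simp only [Finset.mem_biUnion, Finset.mem_univ, iff_true, hP,
          Finset.mem_insert, Finset.mem_singleton]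
        cases x2 with
        | false => exact ⟨x1, trivial, Or.inl rfl⟩
        | true => exact ⟨x1 - o i, trivial, Or.inr (by rw [sub_add_cancel])⟩
    have hVP : ∀ j, V i (P j) = 2 := by
      intro j
      apply le_antisymm (hV_le i (P j))
      have hmem : ∑ b ∈ P j, w i j b = 2 := by
        rw [hsum]
        simp only [hP, Finset.mem_insert, Finset.mem_singleton]
        norm_num
      have := Finset.le_sup' (f := fun j' => ∑ b ∈ P j, w i j' b) (Finset.mem_univ j)
      rw [hmem] at this
      exact this
    have hmem2 : (2:ℝ) ∈ { x : ℝ | ∃ A : Fin n → Finset (Fin n × Bool),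
        IsPartition (Finset.univ : Finset (Fin n × Bool)) A ∧ x = ⨅ j, V i (A j) } := by
      refine ⟨P, hPart, ?_⟩
      simp only [hVP]
      exact (ciInf_const).symm
    have hub : ∀ x ∈ { x : ℝ | ∃ A : Fin n → Finset (Fin n × Bool),
        IsPartition (Finset.univ : Finset (Fin n × Bool)) A ∧ x = ⨅ j, V i (A j) }, x ≤ 2 := by
      rintro x ⟨A, _, rfl⟩
      calc ⨅ j, V i (A j) ≤ V i (A 0) :=
            ciInf_le (Set.finite_range _).bddBelow 0
        _ ≤ 2 := hV_le i (A 0)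
    exact le_antisymm (csSup_le ⟨2, hmem2⟩ hub) (le_csSup ⟨2, hub⟩ hmem2)
  · -- every allocation gives some agent value ≤ 1
    intro A hA
    by_contra hcon
    push_neg at hcon
    have key : ∀ i, ∃ j, ((j, false) : Fin n × Bool) ∈ A i ∧
        ((j + o i, true) : Fin n × Bool) ∈ A i := by
      intro i
      obtain ⟨j, _, hj⟩ := (Finset.lt_sup'_iff hne).mp (hcon i)
      rw [hsum] at hj
      by_cases h1 : ((j, false) : Fin n × Bool) ∈ A i
      · by_cases h2 : ((j + o i, true) : Fin n × Bool) ∈ A i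
        · exact ⟨j, h1, h2⟩
        · simp [h1, h2] at hj
      · simp only [h1, if_neg, if_false] at hj
        split_ifs at hj <;> linarith
    choose c hc1 hc2 using key
    have hcinj : Function.Injective c := by
      intro i i' h
      by_contra hne'
      exact Finset.disjoint_left.mp (hA.1 i i' hne') (hc1 i) (h ▸ hc1 i')
    have hginj : Function.Injective (fun i => c i + o i) := by
      intro i i' h
      by_contra hne'
      have h' : ((c i + o i, true) : Fin n × Bool) = (c i' + o i', true) := by
        simp only at h; rw [h]
      exact Finset.disjoint_left.mp (hA.1 i i' hne') (hc2 i) (h' ▸ hc2 i')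
    have hcsurj : Function.Surjective c := Finite.injective_iff_surjective.mp hcinj
    obtain ⟨k, hk⟩ := hcsurj (c 0 + o 0)
    by_cases hk0 : k = 0
    · subst hk0
      have h1 : o 0 = 0 := add_eq_left.mp hk.symm
      simp only [ho, if_pos rfl] at h1
      have : n = 1 := Fin.one_eq_zero_iff.mp h1
      omega
    · have hok : o k = 0 := by simp [ho, hk0]
      have : (fun i => c i + o i) k = (fun i => c i + o i) 0 := by
        simp only [hok, add_zero, hk]
      exact hk0 (hginj this)
end

section
/- Let M be a finite set of items with m = |M| ≥ 16, let n ≥ 1 be an integer, and for each agent i ∈ {1, …, n} let V_i be a monotone subadditive valuation on subsets of M with V_i(∅) = 0 and V_i(S) ≥ 0 for every S ⊆ M. Then there exists an allocation A_1, …, A_n of M such that V_i(A_i) ≥ MMS_{V_i}^n(M) / (10 · ⌈log₂ m⌉) for every agent i. -/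
/-- A valuation is subadditive. -/
def SubadditiveVal {ι : Type*} [DecidableEq ι] (V : Finset ι → ℝ) : Prop :=
  ∀ A B : Finset ι, V (A ∪ B) ≤ V A + V B

/-!
Let `L = ⌈log₂ m⌉` and `τᵢ = MMSᵢ / (10 L)`. Run the greedy algorithm that keeps giving some
remaining agent a smallest set of remaining items worth at least her `τᵢ`, and suppose agent `i`
is left over. Group the handed-out bundles by their scale `a = ⌈log₂ |bundle|⌉` and let `Dₐ` be
the union of the bundles of scale `a`. When the first bundle of more than `2^(a-1)` items was
chosen, all of `Dₐ` was still available, so to `i` every subset of `Dₐ` with at most `2^(a-1)`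
items is worth less than `τᵢ`; by subadditivity every subset with fewer than `2^a` items is worth
less than `2τᵢ`. The items never handed out are worth less than `τᵢ`. Hence each of the `n`
disjoint bundles of an MMS partition of `i`, worth `10 L τᵢ ≥ (2L + 3) τᵢ`, contains at least
`2^a` items of some `Dₐ`. Since `|Dₐ| ≤ 2^a · #(bundles of scale a)`, at most that many MMS
bundles are charged to scale `a`, so `n` is at most the number of served agents, less than `n`.
-/

open Finset Function

section Subadditive

variable {ι κ : Type*} [DecidableEq ι] {v : Finset ι → ℝ}

theorem SubadditiveVal.le_sum_biUnion (hv : SubadditiveVal v) (h0 : v ∅ = 0)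
    (s : Finset κ) (D : κ → Finset ι) : v (s.biUnion D) ≤ ∑ a ∈ s, v (D a) := by
  classical
  induction s using Finset.induction_on with
  | empty => simp [h0]
  | insert a s ha ih =>
    rw [biUnion_insert, sum_insert ha]
    exact (hv _ _).trans (add_le_add_right ih _)

theorem SubadditiveVal.lt_two_mul (hv : SubadditiveVal v) {C : Finset ι} {s : ℕ} {τ : ℝ}
    (hsmall : ∀ W ⊆ C, #W ≤ s → v W < τ) (hC : #C ≤ 2 * s) : v C < 2 * τ := by
  obtain ⟨W, hWC, hW⟩ := exists_subset_card_eq (min_le_right s #C)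
  have hrest : #(C \ W) ≤ s := by rw [card_sdiff_of_subset hWC]; omega
  calc v C = v (W ∪ (C \ W)) := by rw [union_sdiff_of_subset hWC]
    _ ≤ v W + v (C \ W) := hv _ _
    _ < τ + τ := add_lt_add (hsmall W hWC (hW ▸ min_le_left _ _)) (hsmall _ sdiff_subset hrest)
    _ = 2 * τ := by ring

end Subadditive

section Greedy

variable {ι κ : Type*}

/-- The invariant of an agent (valuation `v`, threshold `τ`) left unserved by the greedy algorithm
that keeps giving some agent a smallest set of remaining items worth her threshold, started on the
items `R` and ending with the bundles `A j`, `j ∈ S`. -/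
def IsBlocked (v : Finset ι → ℝ) (τ : ℝ) (R : Finset ι) (S : Finset κ) (A : κ → Finset ι) :
    Prop :=
  ∀ s : ℕ, ∀ W ⊆ R, #W < s → (∀ j ∈ S, #(A j) < s → Disjoint W (A j)) → v W < τ

theorem IsBlocked.insert [DecidableEq ι] [DecidableEq κ] {v : Finset ι → ℝ} {τ : ℝ}
    {R T : Finset ι} {S : Finset κ} {A : κ → Finset ι} {i : κ}
    (hblock : IsBlocked v τ (R \ T) S A) (hi : i ∉ S)
    (hmin : ∀ W ⊆ R, #W < #T → v W < τ) :
    IsBlocked v τ R (insert i S) (update A i T) := by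
  intro s W hWR hWs hW
  by_cases hsT : s ≤ #T
  · exact hmin W hWR (by omega)
  have hWT : Disjoint W T := by
    simpa using hW i (mem_insert_self i S) (by rw [update_self]; omega)
  refine hblock s W (subset_sdiff.2 ⟨hWR, hWT⟩) hWs fun j hj hjs => ?_
  have hji : j ≠ i := fun h => hi (h ▸ hj)
  simpa [hji] using hW j (mem_insert_of_mem hj) (by simpa [hji] using hjs)

theorem exists_greedy_allocation [DecidableEq ι] [DecidableEq κ] (V : κ → Finset ι → ℝ)
    (τ : κ → ℝ) (J : Finset κ) (R : Finset ι) :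
    ∃ (S : Finset κ) (A : κ → Finset ι), S ⊆ J ∧ (S : Set κ).PairwiseDisjoint A ∧
      (∀ i ∈ S, A i ⊆ R ∧ τ i ≤ V i (A i)) ∧
      ∀ i ∈ J, i ∉ S → IsBlocked (V i) (τ i) R S A := by
  induction J using Finset.strongInduction generalizing R with
  | H J ih =>
  set P := (J ×ˢ R.powerset).filter fun p => τ p.1 ≤ V p.1 p.2
  rcases P.eq_empty_or_nonempty with hP | hP
  · refine ⟨∅, fun _ => ∅, empty_subset J, by simp, by simp, fun i hi _ => ?_⟩
    refine fun _ W hW _ _ => lt_of_not_ge fun hτ => ?_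
    have : (i, W) ∈ P := by simp [P, hi, hW, hτ]
    simp [hP] at this
  obtain ⟨⟨i, T⟩, hiT, hmin⟩ := exists_min_image P (fun p => #p.2) hP
  simp only [P, mem_filter, mem_product, mem_powerset] at hiT hmin
  obtain ⟨⟨hiJ, hTR⟩, hTv⟩ := hiT
  obtain ⟨S, A, hSJ, hAdisj, hAval, hAblock⟩ := ih (J.erase i) (erase_ssubset hiJ) (R \ T)
  have hiS : i ∉ S := fun h => by simpa using hSJ h
  have hAT : ∀ j ∈ S, Disjoint T (A j) := fun j hj =>
    disjoint_of_subset_right (hAval j hj).1 disjoint_sdiff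
  have hupd : ∀ j ∈ S, update A i T j = A j := fun j hj =>
    update_of_ne (ne_of_mem_of_not_mem hj hiS) _ _
  refine ⟨insert i S, update A i T, insert_subset hiJ (hSJ.trans (erase_subset i J)),
    ?_, ?_, ?_⟩
  · rw [coe_insert, Set.pairwiseDisjoint_insert_of_notMem (by simpa using hiS)]
    refine ⟨hAdisj.mono_on fun j hj => (hupd j hj).le, fun j hj => ?_⟩
    simpa [hupd j hj] using hAT j hj
  · intro j hj
    rcases mem_insert.1 hj with rfl | hj
    · simpa using ⟨hTR, hTv⟩
    · simpa [hupd j hj] using ⟨(hAval j hj).1.trans sdiff_subset, (hAval j hj).2⟩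
  · intro i' hi' hi'S
    have hi'i : i' ≠ i := fun h => hi'S (h ▸ mem_insert_self i S)
    refine (hAblock i' (mem_erase.2 ⟨hi'i, hi'⟩) fun h => hi'S (mem_insert_of_mem h)).insert hiS
      fun W hW hWT => lt_of_not_ge fun hτ => ?_
    exact absurd (hmin (i', W) ⟨⟨hi', hW⟩, hτ⟩) (by simpa using hWT)

end Greedy

theorem Nat.eq_zero_of_clog_eq_of_le_two_pow_div_two {c a : ℕ} (hca : Nat.clog 2 c = a)
    (hc : c ≤ 2 ^ a / 2) : c = 0 := by
  rcases a with _ | a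
  · simpa using hc
  · rw [pow_succ, Nat.mul_div_cancel _ two_pos] at hc
    have := Nat.clog_le_of_le_pow hc
    omega

theorem mul_card_filter_le_card {ι β : Type*} [DecidableEq ι] [Fintype β] {Q : β → Finset ι}
    (hQ : Pairwise (Disjoint on Q)) (D : Finset ι) (b : ℕ) :
    b * #{j | b ≤ #(Q j ∩ D)} ≤ #D := by
  set F := ({j | b ≤ #(Q j ∩ D)} : Finset β)
  have hdisj : (F : Set β).PairwiseDisjoint fun j => Q j ∩ D := fun j _ k _ hjk =>
    (hQ hjk).mono inter_subset_left inter_subset_left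
  calc b * #F = ∑ _j ∈ F, b := by rw [sum_const, smul_eq_mul, mul_comm]
    _ ≤ ∑ j ∈ F, #(Q j ∩ D) := sum_le_sum fun j hj => (mem_filter.1 hj).2
    _ = #(F.biUnion fun j => Q j ∩ D) := (card_biUnion hdisj).symm
    _ ≤ #D := card_le_card (biUnion_subset.2 fun _ _ => inter_subset_right)

theorem clog_card_mem_range {ι : Type*} [Fintype ι] (s : Finset ι) :
    Nat.clog 2 #s ∈ range (Nat.clog 2 (Fintype.card ι) + 1) :=
  mem_range.2 (Nat.lt_succ_of_le (Nat.clog_mono_right 2 (card_le_univ s)))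

section Scales

variable {ι κ : Type*} [DecidableEq ι] {S : Finset κ} {A : κ → Finset ι}

def scaleUnion (S : Finset κ) (A : κ → Finset ι) (a : ℕ) : Finset ι :=
  {j ∈ S | Nat.clog 2 #(A j) = a}.biUnion A

theorem card_scaleUnion_le (a : ℕ) :
    #(scaleUnion S A a) ≤ #{j ∈ S | Nat.clog 2 #(A j) = a} * 2 ^ a :=
  card_biUnion_le_card_mul _ _ _ fun _ hj =>
    (mem_filter.1 hj).2 ▸ Nat.le_pow_clog one_lt_two _

variable [Fintype ι] {v : Finset ι → ℝ} {τ : ℝ}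

theorem biUnion_scaleUnion :
    (range (Nat.clog 2 (Fintype.card ι) + 1)).biUnion (scaleUnion S A) = S.biUnion A := by
  classical
  unfold scaleUnion
  rw [← biUnion_biUnion, biUnion_filter_eq_of_maps_to]
  exact fun j _ => clog_card_mem_range (A j)

theorem IsBlocked.lt_of_subset_scaleUnion (hblock : IsBlocked v τ univ S A)
    (hA : (S : Set κ).PairwiseDisjoint A) {a : ℕ} {W : Finset ι} (hW : W ⊆ scaleUnion S A a)
    (hWa : #W ≤ 2 ^ a / 2) : v W < τ := by
  refine hblock (2 ^ a / 2 + 1) W (subset_univ W) (by omega) fun j hj hjs => ?_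
  refine disjoint_left.2 fun x hxW hxj => ?_
  obtain ⟨k, hk, hxk⟩ := mem_biUnion.1 (hW hxW)
  obtain ⟨hkS, hka⟩ := mem_filter.1 hk
  obtain rfl : j = k := hA.elim_finset hj hkS x hxj hxk
  have := Nat.eq_zero_of_clog_eq_of_le_two_pow_div_two hka (by omega)
  simp [card_eq_zero.1 this] at hxj

theorem IsBlocked.lt_two_mul_of_subset_scaleUnion (hv : SubadditiveVal v)
    (hblock : IsBlocked v τ univ S A) (hA : (S : Set κ).PairwiseDisjoint A) {a : ℕ}
    {C : Finset ι} (hC : C ⊆ scaleUnion S A a) (hCa : #C < 2 ^ a) : v C < 2 * τ :=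
  hv.lt_two_mul (fun W hW hWa => hblock.lt_of_subset_scaleUnion hA (hW.trans hC) hWa)
    (by omega)

theorem IsBlocked.exists_two_pow_le_card_inter_scaleUnion (hv : SubadditiveVal v)
    (h0 : v ∅ = 0) (hblock : IsBlocked v τ univ S A) (hA : (S : Set κ).PairwiseDisjoint A)
    {X : Finset ι} (hX : (2 * Nat.clog 2 (Fintype.card ι) + 3) * τ ≤ v X) :
    ∃ a ∈ range (Nat.clog 2 (Fintype.card ι) + 1), 2 ^ a ≤ #(X ∩ scaleUnion S A a) := by
  set L := Nat.clog 2 (Fintype.card ι)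
  by_contra! hsmall
  have hleft : v (X \ S.biUnion A) < τ :=
    hblock (Fintype.card ι + 1) _ (subset_univ _) (Nat.lt_succ_of_le (card_le_univ _))
      fun j hj _ => disjoint_of_subset_right (subset_biUnion_of_mem A hj) sdiff_disjoint
  have hsplit : v X ≤ v (X \ S.biUnion A) + ∑ a ∈ range (L + 1), v (X ∩ scaleUnion S A a) := by
    calc v X = v (X \ S.biUnion A ∪ X ∩ S.biUnion A) := by rw [sdiff_union_inter]
      _ ≤ v (X \ S.biUnion A) + v (X ∩ S.biUnion A) := hv _ _
      _ ≤ _ := by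
        rw [← biUnion_scaleUnion, inter_biUnion]
        exact add_le_add_right (hv.le_sum_biUnion h0 _ _) _
  have hscales : ∑ a ∈ range (L + 1), v (X ∩ scaleUnion S A a) ≤ ∑ _a ∈ range (L + 1), 2 * τ :=
    sum_le_sum fun a ha => (hblock.lt_two_mul_of_subset_scaleUnion hv hA inter_subset_right
      (hsmall a ha)).le
  have : v X < (2 * L + 3) * τ := by
    calc v X < τ + ∑ _a ∈ range (L + 1), 2 * τ := by linarith
      _ = (2 * L + 3) * τ := by rw [sum_const, card_range, nsmul_eq_mul]; push_cast; ring
  linarith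

theorem IsBlocked.card_le (hv : SubadditiveVal v) (h0 : v ∅ = 0)
    (hblock : IsBlocked v τ univ S A) (hA : (S : Set κ).PairwiseDisjoint A)
    {β : Type*} [Fintype β] {Q : β → Finset ι} (hQ : Pairwise (Disjoint on Q))
    (hQv : ∀ j, (2 * Nat.clog 2 (Fintype.card ι) + 3) * τ ≤ v (Q j)) :
    Fintype.card β ≤ #S := by
  classical
  set L := Nat.clog 2 (Fintype.card ι)
  choose σ hσL hσ using fun j => hblock.exists_two_pow_le_card_inter_scaleUnion hv h0 hA (hQv j)
  calc Fintype.card β = ∑ a ∈ range (L + 1), #{j | σ j = a} :=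
        card_eq_sum_card_fiberwise fun j _ => hσL j
    _ ≤ ∑ a ∈ range (L + 1), #{j ∈ S | Nat.clog 2 #(A j) = a} := sum_le_sum fun a _ => ?_
    _ = #S := (card_eq_sum_card_fiberwise fun j _ => clog_card_mem_range (A j)).symm
  have hfiber : ({j | σ j = a} : Finset β) ⊆
      ({j | 2 ^ a ≤ #(Q j ∩ scaleUnion S A a)} : Finset β) :=
    fun j hj => by
      obtain rfl := (mem_filter.1 hj).2
      simpa using hσ j
  refine Nat.le_of_mul_le_mul_left ?_ (pow_pos two_pos a)
  calc 2 ^ a * #{j | σ j = a} ≤ 2 ^ a * #{j | 2 ^ a ≤ #(Q j ∩ scaleUnion S A a)} :=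
        Nat.mul_le_mul_left _ (card_le_card hfiber)
    _ ≤ #(scaleUnion S A a) := mul_card_filter_le_card hQ _ _
    _ ≤ 2 ^ a * #{j ∈ S | Nat.clog 2 #(A j) = a} := by
      rw [mul_comm]; exact card_scaleUnion_le a

end Scales

section MaximinShare

variable {ι : Type*} [Fintype ι] [DecidableEq ι] {n : ℕ}

theorem exists_isPartition_forall_subset (hn : 1 ≤ n) (A : Fin n → Finset ι)
    (hA : Pairwise (Disjoint on A)) :
    ∃ B : Fin n → Finset ι, IsPartition univ B ∧ ∀ i, A i ⊆ B i := by
  set i₀ : Fin n := ⟨0, hn⟩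
  set U := univ.biUnion A
  have hU : ∀ j, Disjoint (univ \ U) (A j) := fun j =>
    disjoint_of_subset_right (subset_biUnion_of_mem A (mem_univ j)) sdiff_disjoint
  have hAB : ∀ i, A i ⊆ update A i₀ (A i₀ ∪ (univ \ U)) i := fun i => by
    rcases eq_or_ne i i₀ with rfl | hi
    · simp
    · simp [hi]
  refine ⟨update A i₀ (A i₀ ∪ (univ \ U)), ⟨fun i j hij => ?_, ?_⟩, hAB⟩
  · have key : ∀ j ≠ i₀, Disjoint (A i₀ ∪ (univ \ U)) (A j) := fun j hj =>
      disjoint_union_left.2 ⟨hA hj.symm, hU j⟩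
    rcases eq_or_ne i i₀ with rfl | hi <;> rcases eq_or_ne j i₀ with rfl | hj
    · exact absurd rfl hij
    · simpa [hj] using key j hj
    · simpa [hi] using (key i hi).symm
    · simpa [hi, hj] using hA hij
  · refine eq_univ_of_forall fun x => mem_biUnion.2 ?_
    by_cases hx : x ∈ U
    · obtain ⟨j, -, hxj⟩ := mem_biUnion.1 hx
      exact ⟨j, mem_univ j, hAB j hxj⟩
    · exact ⟨i₀, mem_univ i₀, by simp [hx]⟩

theorem exists_isPartition_forall_MMS_le (hn : 1 ≤ n) (f : Finset ι → ℝ) :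
    ∃ Q : Fin n → Finset ι, IsPartition univ Q ∧ ∀ j, MMS univ f n ≤ f (Q j) := by
  set X := {x : ℝ | ∃ A : Fin n → Finset ι, IsPartition univ A ∧ x = ⨅ j, f (A j)}
  obtain ⟨P, hP, -⟩ := exists_isPartition_forall_subset hn (fun _ => (∅ : Finset ι))
    fun _ _ _ => disjoint_bot_left
  have hX : X.Nonempty := ⟨_, P, hP, rfl⟩
  have hXfin : X.Finite := (Set.finite_range fun A : Fin n → Finset ι => ⨅ j, f (A j)).subset
    (by rintro _ ⟨A, -, rfl⟩; exact ⟨A, rfl⟩)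
  obtain ⟨Q, hQ, hQX⟩ := hX.csSup_mem hXfin
  exact ⟨Q, hQ, fun j => hQX.le.trans (ciInf_le (Set.finite_range _).bddBelow j)⟩

theorem not_isBlocked_MMS_div {κ : Type*} {S : Finset κ} {A : κ → Finset ι}
    {v : Finset ι → ℝ} (hn : 1 ≤ n) (hv : SubadditiveVal v) (h0 : v ∅ = 0)
    (hA : (S : Set κ).PairwiseDisjoint A) (hS : #S < n) :
    ¬ IsBlocked v (MMS univ v n / (10 * Nat.clog 2 (Fintype.card ι))) univ S A := by
  set L := Nat.clog 2 (Fintype.card ι)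
  set τ := MMS univ v n / (10 * L)
  intro hblock
  have hτ : 0 < τ := by simpa [h0] using hblock 1 ∅ (empty_subset _) one_pos (by simp)
  -- `L = 0` would make `τ` the junk value `MMS / 0 = 0`
  have hL : (1 : ℝ) ≤ L := Nat.one_le_cast.2 (Nat.pos_of_ne_zero fun h => by simp [τ, h] at hτ)
  obtain ⟨Q, hQ, hQv⟩ := exists_isPartition_forall_MMS_le hn v
  have hMMS : (2 * L + 3) * τ ≤ MMS univ v n :=
    calc (2 * L + 3) * τ ≤ 10 * L * τ := by nlinarith
      _ = MMS univ v n := by simp only [τ]; field_simp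
  have := hblock.card_le hv h0 hA hQ.1 fun j => hMMS.trans (hQv j)
  simp only [Fintype.card_fin] at this
  omega

end MaximinShare

theorem exists_log_MMS_allocation_subadditive_general {ι : Type*} [Fintype ι] [DecidableEq ι]
    {n : ℕ} (hn : 1 ≤ n)
    (V : Fin n → Finset ι → ℝ)
    (hzero : ∀ i, V i ∅ = 0)
    (hmono : ∀ i, ∀ S T : Finset ι, S ⊆ T → V i S ≤ V i T)
    (hsub : ∀ i, SubadditiveVal (V i)) :
    ∃ A : Fin n → Finset ι, IsPartition (Finset.univ : Finset ι) A ∧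
      ∀ i, MMS Finset.univ (V i) n / (10 * (Nat.clog 2 (Fintype.card ι) : ℝ)) ≤ V i (A i) := by
  obtain ⟨S, A, -, hAdisj, hAval, hblock⟩ := exists_greedy_allocation V
    (fun i => MMS univ (V i) n / (10 * Nat.clog 2 (Fintype.card ι))) univ univ
  have hS : S = univ := eq_univ_of_forall fun i => by_contra fun hiS =>
    have hcard : #S < n := by
      simpa using card_lt_card (ssubset_univ_iff.2 (ne_of_mem_of_not_mem' (mem_univ i) hiS).symm)
    not_isBlocked_MMS_div hn (hsub i) (hzero i) hAdisj hcard (hblock i (mem_univ i) hiS)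
  subst hS
  obtain ⟨B, hB, hAB⟩ := exists_isPartition_forall_subset hn A
    fun i j hij => hAdisj (mem_univ i) (mem_univ j) hij
  exact ⟨B, hB, fun i => (hAval i (mem_univ i)).2.trans (hmono i _ _ (hAB i))⟩

/-- For `m = |M| ≥ 16` items and any number `n ≥ 1` of agents with monotone, nonnegative,
normalized subadditive valuations, there is an allocation giving every agent at least
`MMS_i / (10 ⌈log₂ m⌉)`. -/
theorem exists_log_MMS_allocation_subadditive {ι : Type*} [Fintype ι] [DecidableEq ι]
    (hm : 16 ≤ Fintype.card ι) {n : ℕ} (hn : 1 ≤ n)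
    (V : Fin n → Finset ι → ℝ)
    (hzero : ∀ i, V i ∅ = 0)
    (hnonneg : ∀ i (S : Finset ι), 0 ≤ V i S)
    (hmono : ∀ i, ∀ S T : Finset ι, S ⊆ T → V i S ≤ V i T)
    (hsub : ∀ i, SubadditiveVal (V i)) :
    ∃ A : Fin n → Finset ι, IsPartition (Finset.univ : Finset ι) A ∧
      ∀ i, MMS Finset.univ (V i) n / (10 * (Nat.clog 2 (Fintype.card ι) : ℝ)) ≤ V i (A i) :=
  exists_log_MMS_allocation_subadditive_general hn V hzero hmono hsub
end

section
/- Let M be a finite set with |M| = m ≥ 1 and let f be a subadditive valuation on subsets of M with f(∅) = 0 and f(S) ≥ 0 for every S ⊆ M. Then there exists a nonnegative weight function w : M → ℝ such that Σ_{b ∈ S} w(b) ≤ f(S) for every S ⊆ M, and Σ_{b ∈ M} w(b) ≥ (3/4) · f(M) / (⌈log₂ m⌉ + 2). -/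
open Finset

theorem harmonic_add_div_le (k u : ℕ) : harmonic k + u / (k + u) ≤ harmonic (k + u) := by
  rw [harmonic, harmonic, sum_range_add]
  gcongr
  calc (u : ℚ) / (k + u) = ∑ _i ∈ range u, ((k + u : ℕ) : ℚ)⁻¹ := by
        simp [div_eq_mul_inv]
    _ ≤ ∑ i ∈ range u, ((k + i + 1 : ℕ) : ℚ)⁻¹ := sum_le_sum fun i hi =>
        inv_anti₀ (by positivity) (by exact_mod_cast (by simpa using hi : k + i + 1 ≤ k + u))

theorem harmonic_le_clog_add_one (n : ℕ) : (harmonic n : ℝ) ≤ Nat.clog 2 n + 1 := by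
  rcases n.eq_zero_or_pos with rfl | hn
  · simp
  have hlog : Real.log n ≤ Nat.clog 2 n := by
    calc Real.log n ≤ Real.log ((2 : ℕ) ^ Nat.clog 2 n : ℕ) := by
          gcongr
          exact Nat.le_pow_clog one_lt_two n
      _ = Nat.clog 2 n * Real.log 2 := by push_cast; rw [Real.log_pow]
      _ ≤ Nat.clog 2 n := by
          have := Real.log_two_lt_d9
          nlinarith [(Nat.clog 2 n).cast_nonneg (α := ℝ)]
  linarith [harmonic_le_one_add_log n]

namespace SubadditiveVal

variable {ι : Type*} [DecidableEq ι] {f : Finset ι → ℝ}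

theorem nonneg (hf : SubadditiveVal f) (S : Finset ι) : 0 ≤ f S := by
  have := hf S S
  rw [union_self] at this
  linarith

end SubadditiveVal

section MonotoneMinorant

variable {ι : Type*} [Fintype ι] [DecidableEq ι] {f : Finset ι → ℝ}

/-- The largest monotone function below `f`. -/
noncomputable def monotoneMinorant (f : Finset ι → ℝ) (S : Finset ι) : ℝ :=
  (univ.filter (S ⊆ ·)).inf' ⟨univ, by simp⟩ f

theorem monotoneMinorant_le {S T : Finset ι} (h : S ⊆ T) : monotoneMinorant f S ≤ f T :=
  inf'_le f (by simpa using h)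

theorem exists_monotoneMinorant_eq (f : Finset ι → ℝ) (S : Finset ι) :
    ∃ T, S ⊆ T ∧ monotoneMinorant f S = f T := by
  obtain ⟨T, hT, hfT⟩ := exists_mem_eq_inf' (s := univ.filter (S ⊆ ·)) ⟨univ, by simp⟩ f
  exact ⟨T, (mem_filter.mp hT).2, hfT⟩

theorem monotone_monotoneMinorant : Monotone (monotoneMinorant f) := fun _ _ hST =>
  le_inf' _ _ fun _ hT => monotoneMinorant_le (hST.trans (mem_filter.mp hT).2)

theorem monotoneMinorant_univ : monotoneMinorant f univ = f univ := by
  obtain ⟨T, hT, hfT⟩ := exists_monotoneMinorant_eq f univ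
  rwa [univ_subset_iff.mp hT] at hfT

theorem SubadditiveVal.subadditiveVal_monotoneMinorant (hf : SubadditiveVal f) :
    SubadditiveVal (monotoneMinorant f) := by
  intro A B
  obtain ⟨TA, hATA, hA⟩ := exists_monotoneMinorant_eq f A
  obtain ⟨TB, hBTB, hB⟩ := exists_monotoneMinorant_eq f B
  calc monotoneMinorant f (A ∪ B) ≤ f (TA ∪ TB) := monotoneMinorant_le (union_subset_union hATA hBTB)
    _ ≤ f TA + f TB := hf TA TB
    _ = _ := by rw [hA, hB]

end MonotoneMinorant

section MinAvg

variable {ι : Type*} {g : Finset ι → ℝ}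

noncomputable def minAvg (g : Finset ι → ℝ) (T : Finset ι) : ℝ :=
  if h : T.Nonempty then
    (T.powerset.filter Finset.Nonempty).inf' ⟨T, by simpa using h⟩ fun U => g U / #U
  else 0

theorem minAvg_le {T U : Finset ι} (hUT : U ⊆ T) (hU : U.Nonempty) : minAvg g T ≤ g U / #U := by
  rw [minAvg, dif_pos (hU.mono hUT)]
  exact inf'_le _ (by simpa using ⟨hUT, hU⟩)

theorem exists_minAvg_eq {T : Finset ι} (hT : T.Nonempty) :
    ∃ U ⊆ T, U.Nonempty ∧ minAvg g T = g U / #U := by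
  rw [minAvg, dif_pos hT]
  obtain ⟨U, hU, hgU⟩ := exists_mem_eq_inf' (s := T.powerset.filter Finset.Nonempty)
    ⟨T, by simpa using hT⟩ fun U => g U / #U
  rw [mem_filter, mem_powerset] at hU
  exact ⟨U, hU.1, hU.2, hgU⟩

theorem minAvg_nonneg (hg : ∀ S, 0 ≤ g S) (T : Finset ι) : 0 ≤ minAvg g T := by
  rcases T.eq_empty_or_nonempty with rfl | hT
  · simp [minAvg]
  obtain ⟨U, -, -, hgU⟩ := exists_minAvg_eq (g := g) hT
  rw [hgU]
  exact div_nonneg (hg U) (Nat.cast_nonneg _)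

theorem card_inter_mul_minAvg_le [DecidableEq ι] (hmono : Monotone g) (hg : ∀ S, 0 ≤ g S) (S T : Finset ι) :
    #(S ∩ T) * minAvg g T ≤ g S := by
  rcases (S ∩ T).eq_empty_or_nonempty with hST | hST
  · simpa [hST] using hg S
  have hcard : (0 : ℝ) < #(S ∩ T) := by exact_mod_cast hST.card_pos
  calc #(S ∩ T) * minAvg g T ≤ #(S ∩ T) * (g (S ∩ T) / #(S ∩ T)) := by
        gcongr
        exact minAvg_le inter_subset_right hST
    _ = g (S ∩ T) := by field_simp
    _ ≤ g S := hmono inter_subset_left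

end MinAvg

section Peeling

variable {ι : Type*} [DecidableEq ι] {g : Finset ι → ℝ}

theorem le_mul_harmonic_of_forall_exists_le (hg : SubadditiveVal g) (hg0 : g ∅ = 0) {V : ℝ}
    (hV : 0 ≤ V) (hpeel : ∀ R : Finset ι, R.Nonempty → ∃ U ⊆ R, U.Nonempty ∧ g U * #R ≤ V * #U)
    (R : Finset ι) : g R ≤ V * harmonic #R := by
  induction R using Finset.strongInduction with
  | H R ih =>
    rcases R.eq_empty_or_nonempty with rfl | hR
    · simp [hg0]
    obtain ⟨U, hUR, hU, hgU⟩ := hpeel R hR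
    have hrest := ih (R \ U) (sdiff_ssubset hUR hU)
    have hcard : #(R \ U) + #U = #R := card_sdiff_add_card_eq_card hUR
    have hR' : (0 : ℝ) < #R := by exact_mod_cast hR.card_pos
    have hH : (harmonic #(R \ U) : ℝ) + #U / #R ≤ harmonic #R := by
      have := (Rat.cast_le (K := ℝ)).mpr (harmonic_add_div_le #(R \ U) #U)
      rw [← hcard]
      push_cast at this ⊢
      exact this
    calc g R = g (U ∪ (R \ U)) := by rw [union_sdiff_of_subset hUR]
      _ ≤ g U + g (R \ U) := hg _ _
      _ ≤ V * #U / #R + V * harmonic #(R \ U) := by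
          gcongr
          rwa [le_div_iff₀ hR']
      _ = V * (harmonic #(R \ U) + #U / #R) := by ring
      _ ≤ V * harmonic #R := by gcongr

end Peeling

section Domination

variable {ι : Type*} [Fintype ι] [DecidableEq ι] {f g : Finset ι → ℝ}

theorem exists_additive_le_of_monotone (hg : SubadditiveVal g) (hmono : Monotone g)
    (hg0 : g ∅ = 0) :
    ∃ w : ι → ℝ, (∀ b, 0 ≤ w b) ∧ (∀ S : Finset ι, ∑ b ∈ S, w b ≤ g S) ∧
      g univ ≤ harmonic (Fintype.card ι) * ∑ b, w b := by
  obtain ⟨T, -, hT⟩ := exists_max_image univ (fun T => #T * minAvg g T) univ_nonempty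
  have hρ := minAvg_nonneg hg.nonneg (g := g) T
  refine ⟨fun b => if b ∈ T then minAvg g T else 0, fun b => ite_nonneg hρ le_rfl,
    fun S => ?_, ?_⟩
  · rw [sum_ite_mem, sum_const, nsmul_eq_mul]
    exact card_inter_mul_minAvg_le hmono hg.nonneg S T
  rw [sum_ite_mem, univ_inter, sum_const, nsmul_eq_mul, mul_comm, ← card_univ]
  refine le_mul_harmonic_of_forall_exists_le hg hg0 (by positivity) (fun R hR => ?_) univ
  obtain ⟨U, hUR, hU, hρR⟩ := exists_minAvg_eq (g := g) hR
  have hU' : (0 : ℝ) < #U := by exact_mod_cast hU.card_pos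
  refine ⟨U, hUR, hU, ?_⟩
  calc g U * #R = #R * minAvg g R * #U := by rw [hρR]; field_simp
    _ ≤ #T * minAvg g T * #U := mul_le_mul_of_nonneg_right (hT R (mem_univ R)) hU'.le

theorem exists_additive_le (hf : SubadditiveVal f) (hf0 : f ∅ = 0) :
    ∃ w : ι → ℝ, (∀ b, 0 ≤ w b) ∧ (∀ S : Finset ι, ∑ b ∈ S, w b ≤ f S) ∧
      f univ ≤ harmonic (Fintype.card ι) * ∑ b, w b := by
  have hg0 : monotoneMinorant f ∅ = 0 :=
    le_antisymm (hf0 ▸ monotoneMinorant_le subset_rfl) (hf.subadditiveVal_monotoneMinorant.nonneg ∅)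
  obtain ⟨w, hw0, hwg, hgw⟩ :=
    exists_additive_le_of_monotone hf.subadditiveVal_monotoneMinorant monotone_monotoneMinorant hg0
  exact ⟨w, hw0, fun S => (hwg S).trans (monotoneMinorant_le subset_rfl),
    monotoneMinorant_univ (f := f) ▸ hgw⟩

end Domination

theorem subadditive_dominates_additive_general {ι : Type*} [Fintype ι] [DecidableEq ι]
    (f : Finset ι → ℝ) (hzero : f ∅ = 0)
    (hsub : SubadditiveVal f) :
    ∃ w : ι → ℝ, (∀ b, 0 ≤ w b) ∧ (∀ S : Finset ι, ∑ b ∈ S, w b ≤ f S) ∧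
      (3 / 4 : ℝ) * f Finset.univ / ((Nat.clog 2 (Fintype.card ι) : ℝ) + 2) ≤ ∑ b, w b := by
  obtain ⟨w, hw0, hwf, hfw⟩ := exists_additive_le hsub hzero
  refine ⟨w, hw0, hwf, ?_⟩
  have hH := harmonic_le_clog_add_one (Fintype.card ι)
  have hf := hsub.nonneg univ
  have hw : 0 ≤ ∑ b, w b := sum_nonneg fun b _ => hw0 b
  rw [div_le_iff₀ (by positivity)]
  nlinarith

/-- Every nonnegative normalized subadditive valuation on a finite set of `m ≥ 1` items
dominates an additive valuation whose total weight is at least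
`(3/4) · f(M) / (⌈log₂ m⌉ + 2)`. -/
theorem subadditive_dominates_additive {ι : Type*} [Fintype ι] [DecidableEq ι]
    (hm : 1 ≤ Fintype.card ι)
    (f : Finset ι → ℝ) (hzero : f ∅ = 0) (hnonneg : ∀ S : Finset ι, 0 ≤ f S)
    (hsub : SubadditiveVal f) :
    ∃ w : ι → ℝ, (∀ b, 0 ≤ w b) ∧ (∀ S : Finset ι, ∑ b ∈ S, w b ≤ f S) ∧
      (3 / 4 : ℝ) * f Finset.univ / ((Nat.clog 2 (Fintype.card ι) : ℝ) + 2) ≤ ∑ b, w b :=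
  subadditive_dominates_additive_general f hzero hsub
end

section
/- Let M be a finite set with |M| = m ≥ 1, let n ≥ 1 be an integer, and let f be a monotone subadditive valuation on subsets of M with f(∅) = 0 and f(S) ≥ 0 for every S ⊆ M. Then there exists an XOS valuation g on subsets of M such that g(S) ≤ f(S) for every S ⊆ M and MMS_g^n(M) ≥ (3/4) · MMS_f^n(M) / (⌈log₂ m⌉ + 2). -/
noncomputable def harm : ℕ → ℝ := fun s => ∑ i ∈ Finset.range s, (1 : ℝ) / (i + 1)

lemma harm_nonneg (s : ℕ) : 0 ≤ harm s :=
  Finset.sum_nonneg (fun i _ => by positivity)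

lemma harm_mono : Monotone harm := fun a b hab =>
  Finset.sum_le_sum_of_subset_of_nonneg (Finset.range_subset_range.2 hab) (fun i _ _ => by positivity)

lemma harm_succ (s : ℕ) : harm (s + 1) = harm s + 1 / ((s : ℝ) + 1) := by
  simp [harm, Finset.sum_range_succ]

lemma harm_lower (a k : ℕ) : harm a + (k : ℝ) / ((a : ℝ) + k) ≤ harm (a + k) := by
  induction k with
  | zero => simp
  | succ k ih =>
    have h1 : harm (a + (k + 1)) = harm (a + k) + 1 / ((a : ℝ) + k + 1) := by
      rw [← add_assoc, harm_succ]; push_cast; ring_nf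
    rw [h1]
    have h2 : ((k : ℝ) + 1) / ((a : ℝ) + (k + 1)) ≤ (k : ℝ) / ((a : ℝ) + k) + 1 / ((a : ℝ) + k + 1) := by
      rcases Nat.eq_zero_or_pos (a + k) with h | h
      · have ha : a = 0 := by omega
        have hk : k = 0 := by omega
        subst ha; subst hk; norm_num
      · have hpos : (0 : ℝ) < (a : ℝ) + k := by
          have : (0:ℝ) < ((a + k : ℕ) : ℝ) := by exact_mod_cast h
          push_cast at this; linarith
        rw [div_add_div _ _ (by linarith) (by linarith), div_le_div_iff₀ (by linarith) (by positivity)]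
        ring_nf
        nlinarith [hpos]
    push_cast
    push_cast at ih h2
    linarith [ih, h2]

lemma harm_upper (a k : ℕ) : harm (a + k) ≤ harm a + (k : ℝ) / ((a : ℝ) + 1) := by
  induction k with
  | zero => simp
  | succ k ih =>
    have h1 : harm (a + (k + 1)) = harm (a + k) + 1 / ((a : ℝ) + k + 1) := by
      rw [← add_assoc, harm_succ]; push_cast; ring_nf
    have h3 : 1 / ((a : ℝ) + k + 1) ≤ 1 / ((a : ℝ) + 1) := by
      apply one_div_le_one_div_of_le (by positivity)
      have : (0:ℝ) ≤ (k:ℝ) := Nat.cast_nonneg k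
      linarith
    have h4 : ((k : ℝ) + 1) / ((a : ℝ) + 1) = (k : ℝ) / ((a : ℝ) + 1) + 1 / ((a : ℝ) + 1) := by
      ring
    push_cast
    push_cast at ih
    linarith

lemma harm_pow (k : ℕ) : harm (2 ^ k) ≤ (k : ℝ) + 1 := by
  induction k with
  | zero => simp [harm]
  | succ k ih =>
    have h1 : 2 ^ (k + 1) = 2 ^ k + 2 ^ k := by ring
    have h2 := harm_upper (2 ^ k) (2 ^ k)
    have h3 : ((2 ^ k : ℕ) : ℝ) / (((2 ^ k : ℕ) : ℝ) + 1) ≤ 1 := by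
      rw [div_le_one (by positivity)]; linarith
    rw [h1]
    push_cast
    push_cast at ih h2 h3
    linarith

lemma harm_le_clog (s : ℕ) (hs : 1 ≤ s) : harm s ≤ (Nat.clog 2 s : ℝ) + 1 := by
  calc harm s ≤ harm (2 ^ Nat.clog 2 s) := harm_mono (Nat.le_pow_clog one_lt_two s)
  _ ≤ (Nat.clog 2 s : ℝ) + 1 := harm_pow _

lemma key_prices {ι : Type*} [DecidableEq ι] (f : Finset ι → ℝ) (hzero : f ∅ = 0)
    (hnonneg : ∀ S : Finset ι, 0 ≤ f S)
    (hmono : ∀ S T : Finset ι, S ⊆ T → f S ≤ f T)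
    (hsub : SubadditiveVal f) :
    ∀ (N : ℕ) (A : Finset ι), A.card ≤ N → ∃ P : ι → ℝ,
      (∀ b, 0 ≤ P b) ∧ (∀ b, b ∉ A → P b = 0) ∧
      f A ≤ ∑ b ∈ A, P b ∧ ∀ S, S ⊆ A → ∑ b ∈ S, P b ≤ harm S.card * f S := by
  intro N
  induction N with
  | zero =>
    intro A hA
    have hAe : A = ∅ := Finset.card_eq_zero.mp (Nat.le_zero.mp hA)
    subst hAe
    refine ⟨fun _ => 0, fun _ => le_refl 0, fun _ _ => rfl, by simp [hzero], ?_⟩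
    intro S hS
    have : S = ∅ := Finset.subset_empty.mp hS
    subst this
    simp [hzero]
  | succ N ih =>
    intro A hA
    rcases Finset.eq_empty_or_nonempty A with hAe | hAne
    · subst hAe
      refine ⟨fun _ => 0, fun _ => le_refl 0, fun _ _ => rfl, by simp [hzero], ?_⟩
      intro S hS
      have : S = ∅ := Finset.subset_empty.mp hS
      subst this
      simp [hzero]
    · -- choose the min-ratio nonempty subset X of A
      have hmem : A ∈ A.powerset.erase ∅ := by
        simp [Finset.mem_erase, Finset.mem_powerset, hAne.ne_empty]
      obtain ⟨X, hXmem, hXmin⟩ := Finset.exists_min_image (A.powerset.erase ∅)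
        (fun X => f X / X.card) ⟨A, hmem⟩
      rw [Finset.mem_erase, Finset.mem_powerset] at hXmem
      obtain ⟨hXne, hXA⟩ := hXmem
      have hXnonempty : X.Nonempty := Finset.nonempty_iff_ne_empty.mpr hXne
      have hXcard : 0 < X.card := Finset.card_pos.mpr hXnonempty
      set r : ℝ := f X / X.card with hr
      have hrnn : 0 ≤ r := div_nonneg (hnonneg X) (by positivity)
      have hA'card : (A \ X).card ≤ N := by
        have h1 := Finset.card_sdiff_of_subset hXA
        have h2 := Finset.card_le_card hXA
        omega
      obtain ⟨P', hP'nn, hP'supp, hP'val, hP'feas⟩ := ih (A \ X) hA'card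
      refine ⟨fun b => if b ∈ X then r else P' b, ?_, ?_, ?_, ?_⟩
      · intro b; dsimp only; split
        · exact hrnn
        · exact hP'nn b
      · intro b hb
        have hbX : b ∉ X := fun h => hb (hXA h)
        have hbA' : b ∉ A \ X := fun h => hb (Finset.mem_sdiff.mp h).1
        simp [hbX, hP'supp b hbA']
      · -- value lower bound
        have hsplit : ∑ b ∈ A ∩ X, (if b ∈ X then r else P' b)
            + ∑ b ∈ A \ X, (if b ∈ X then r else P' b)
            = ∑ b ∈ A, (if b ∈ X then r else P' b) :=
          Finset.sum_inter_add_sum_sdiff A X _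
        have hAX : A ∩ X = X := Finset.inter_eq_right.mpr hXA
        have h1 : ∑ b ∈ A ∩ X, (if b ∈ X then r else P' b) = f X := by
          rw [hAX]
          rw [Finset.sum_congr rfl (fun b hb => if_pos hb)]
          rw [Finset.sum_const, nsmul_eq_mul, hr]
          field_simp
        have h2 : ∑ b ∈ A \ X, (if b ∈ X then r else P' b) = ∑ b ∈ A \ X, P' b := by
          refine Finset.sum_congr rfl (fun b hb => ?_)
          rw [if_neg (Finset.mem_sdiff.mp hb).2]
        have h3 : f A ≤ f X + f (A \ X) := by
          have hu : X ∪ (A \ X) = A := Finset.union_sdiff_of_subset hXA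
          calc f A = f (X ∪ (A \ X)) := by rw [hu]
          _ ≤ f X + f (A \ X) := hsub X (A \ X)
        rw [← hsplit, h1, h2]
        linarith [hP'val]
      · -- dual feasibility
        intro S hSA
        rcases Finset.eq_empty_or_nonempty S with hSe | hSne
        · subst hSe; simp [hzero]
        · have hScard : 0 < S.card := Finset.card_pos.mpr hSne
          set s := S.card with hs
          set k := (S ∩ X).card with hk
          have hks : k ≤ s := Finset.card_le_card (Finset.inter_subset_left)
          have hsk : (S \ X).card = s - k := by
            have := Finset.card_inter_add_card_sdiff S X
            omega
          have hsplit : ∑ b ∈ S ∩ X, (if b ∈ X then r else P' b)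
              + ∑ b ∈ S \ X, (if b ∈ X then r else P' b)
              = ∑ b ∈ S, (if b ∈ X then r else P' b) :=
            Finset.sum_inter_add_sum_sdiff S X _
          have h1 : ∑ b ∈ S ∩ X, (if b ∈ X then r else P' b) = k * r := by
            rw [Finset.sum_congr rfl (fun b hb => if_pos (Finset.mem_inter.mp hb).2)]
            rw [Finset.sum_const, nsmul_eq_mul]
          have h2 : ∑ b ∈ S \ X, (if b ∈ X then r else P' b) = ∑ b ∈ S \ X, P' b := by
            refine Finset.sum_congr rfl (fun b hb => ?_)
            rw [if_neg (Finset.mem_sdiff.mp hb).2]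
          have hSX : S \ X ⊆ A \ X := Finset.sdiff_subset_sdiff hSA (le_refl X)
          have hfeas := hP'feas (S \ X) hSX
          -- r ≤ f S / s  by minimality
          have hSmem : S ∈ A.powerset.erase ∅ := by
            simp [Finset.mem_erase, Finset.mem_powerset, hSne.ne_empty, hSA]
          have hrS : r ≤ f S / s := hXmin S hSmem
          have hfS : f (S \ X) ≤ f S := hmono _ _ (Finset.sdiff_subset)
          -- combine
          have hkr : (k : ℝ) * r ≤ (k : ℝ) / s * f S := by
            have h := mul_le_mul_of_nonneg_left hrS ((Nat.cast_nonneg k : (0:ℝ) ≤ (k:ℝ)))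
            have heq : (k : ℝ) * (f S / s) = (k : ℝ) / s * f S := by ring
            linarith [h, heq.le, heq.ge]
          have hharm : (k : ℝ) / s + harm (s - k) ≤ harm s := by
            have := harm_lower (s - k) k
            have hcast : ((s - k : ℕ) : ℝ) + (k : ℝ) = (s : ℝ) := by
              push_cast [Nat.cast_sub hks]; ring
            rw [hcast] at this
            have heq : s - k + k = s := by omega
            rw [heq] at this
            linarith
          have hmid : ∑ b ∈ S \ X, P' b ≤ harm (s - k) * f S := by
            calc ∑ b ∈ S \ X, P' b ≤ harm (S \ X).card * f (S \ X) := hfeas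
            _ ≤ harm (s - k) * f S := by
              rw [hsk]
              exact mul_le_mul_of_nonneg_left hfS (harm_nonneg _)
          have hfSnn := hnonneg S
          show ∑ b ∈ S, (if b ∈ X then r else P' b) ≤ harm S.card * f S
          rw [← hsplit, h1, h2, ← hs]
          nlinarith [hkr, hmid, hharm, hfSnn, mul_le_mul_of_nonneg_right hharm hfSnn]

lemma harm_card_le {m s : ℕ} (hs : s ≤ m) : harm s ≤ (Nat.clog 2 m : ℝ) + 2 := by
  rcases Nat.eq_zero_or_pos s with h | h
  · subst h
    have := harm_nonneg 0
    have h0 : harm 0 = 0 := by simp [harm]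
    rw [h0]; positivity
  · have h1 := harm_le_clog s h
    have h2 : Nat.clog 2 s ≤ Nat.clog 2 m := Nat.clog_mono_right 2 hs
    have h3 : (Nat.clog 2 s : ℝ) ≤ (Nat.clog 2 m : ℝ) := by exact_mod_cast h2
    linarith

lemma key_scaled {ι : Type*} [Fintype ι] [DecidableEq ι]
    (f : Finset ι → ℝ) (hzero : f ∅ = 0)
    (hnonneg : ∀ S : Finset ι, 0 ≤ f S)
    (hmono : ∀ S T : Finset ι, S ⊆ T → f S ≤ f T)
    (hsub : SubadditiveVal f) (A : Finset ι) :
    ∃ p : ι → ℝ, (∀ b, 0 ≤ p b) ∧ (∀ S : Finset ι, ∑ b ∈ S, p b ≤ f S) ∧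
      f A ≤ ((Nat.clog 2 (Fintype.card ι) : ℝ) + 2) * ∑ b ∈ A, p b := by
  classical
  set D : ℝ := (Nat.clog 2 (Fintype.card ι) : ℝ) + 2 with hD
  have hDpos : 0 < D := by positivity
  obtain ⟨P, hPnn, hPsupp, hPval, hPfeas⟩ :=
    key_prices f hzero hnonneg hmono hsub A.card A le_rfl
  refine ⟨fun b => P b / D, fun b => div_nonneg (hPnn b) hDpos.le, ?_, ?_⟩
  · intro S
    have hsub1 : ∑ b ∈ S ∩ A, P b = ∑ b ∈ S, P b := by
      apply Finset.sum_subset (Finset.inter_subset_left)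
      intro b hb hbn
      exact hPsupp b (fun hbA => hbn (Finset.mem_inter.mpr ⟨hb, hbA⟩))
    have hfeas := hPfeas (S ∩ A) (Finset.inter_subset_right)
    have hcardle : (S ∩ A).card ≤ Fintype.card ι :=
      Finset.card_le_univ _
    have hharm : harm (S ∩ A).card ≤ D := harm_card_le hcardle
    have hfle : f (S ∩ A) ≤ f S := hmono _ _ (Finset.inter_subset_left)
    have h1 : ∑ b ∈ S, P b ≤ D * f S := by
      calc ∑ b ∈ S, P b = ∑ b ∈ S ∩ A, P b := hsub1.symm
      _ ≤ harm (S ∩ A).card * f (S ∩ A) := hfeas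
      _ ≤ D * f S := by
          apply mul_le_mul hharm hfle (hnonneg _) hDpos.le
    rw [← Finset.sum_div, div_le_iff₀ hDpos]
    linarith
  · rw [← Finset.sum_div, mul_div_cancel₀ _ hDpos.ne']
    exact hPval

/-- Every monotone, nonnegative, normalized subadditive valuation `f` on `m ≥ 1` items is
dominated by an XOS valuation `g` whose maximin share with `n` bundles is at least
`(3/4) · MMS_f^n(M) / (⌈log₂ m⌉ + 2)`. -/
theorem subadditive_to_xos_MMS {ι : Type*} [Fintype ι] [DecidableEq ι]
    (hm : 1 ≤ Fintype.card ι) {n : ℕ} (hn : 1 ≤ n)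
    (f : Finset ι → ℝ) (hzero : f ∅ = 0) (hnonneg : ∀ S : Finset ι, 0 ≤ f S)
    (hmono : ∀ S T : Finset ι, S ⊆ T → f S ≤ f T)
    (hsub : SubadditiveVal f) :
    ∃ g : Finset ι → ℝ, IsXOS g ∧ (∀ S : Finset ι, g S ≤ f S) ∧
      (3 / 4 : ℝ) * MMS Finset.univ f n / ((Nat.clog 2 (Fintype.card ι) : ℝ) + 2) ≤
        MMS Finset.univ g n := by
  classical
  haveI : Nonempty (Fin n) := ⟨⟨0, hn⟩⟩
  set D : ℝ := (Nat.clog 2 (Fintype.card ι) : ℝ) + 2 with hD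
  have hDpos : 0 < D := by positivity
  choose p hp1 hp2 hp3 using fun A : Finset ι => key_scaled f hzero hnonneg hmono hsub A
  -- indexing of all subsets
  have hpow : 0 < 2 ^ Fintype.card ι := pow_pos (by norm_num) _
  set k := 2 ^ Fintype.card ι - 1 with hkdef
  have hcard2 : Fintype.card (Finset ι) = k + 1 := by
    rw [Fintype.card_finset, hkdef]
    omega
  let e : Fin (k + 1) ≃ Finset ι := (Fintype.equivFinOfCardEq hcard2).symm
  set g : Finset ι → ℝ :=
    fun S => Finset.univ.sup' Finset.univ_nonempty (fun i : Fin (k + 1) => ∑ b ∈ S, p (e i) b)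
    with hg
  have hgle : ∀ S, g S ≤ f S := fun S => Finset.sup'_le _ _ (fun i _ => hp2 (e i) S)
  have hgge : ∀ S, f S / D ≤ g S := by
    intro S
    have h1 := Finset.le_sup' (fun i : Fin (k + 1) => ∑ b ∈ S, p (e i) b)
      (Finset.mem_univ (e.symm S))
    simp only [Equiv.apply_symm_apply] at h1
    have h2 := hp3 S
    rw [div_le_iff₀ hDpos]
    calc f S ≤ D * ∑ b ∈ S, p S b := h2
    _ = (∑ b ∈ S, p S b) * D := by ring
    _ ≤ g S * D := by
        apply mul_le_mul_of_nonneg_right h1 hDpos.le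
  refine ⟨g, ⟨k, fun i => p (e i), fun i b => hp1 (e i) b, fun S => rfl⟩, hgle, ?_⟩
  -- MMS part
  set Sf := { x : ℝ | ∃ A : Fin n → Finset ι, IsPartition (Finset.univ : Finset ι) A ∧ x = ⨅ j, f (A j) } with hSf
  set Sg := { x : ℝ | ∃ A : Fin n → Finset ι, IsPartition (Finset.univ : Finset ι) A ∧ x = ⨅ j, g (A j) } with hSg
  have hff : Sf.Finite := by
    apply Set.Finite.subset (Set.finite_range (fun A : Fin n → Finset ι => ⨅ j, f (A j)))
    rintro x ⟨A, _, rfl⟩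
    exact ⟨A, rfl⟩
  have hgf : Sg.Finite := by
    apply Set.Finite.subset (Set.finite_range (fun A : Fin n → Finset ι => ⨅ j, g (A j)))
    rintro x ⟨A, _, rfl⟩
    exact ⟨A, rfl⟩
  have hA0 : IsPartition (Finset.univ : Finset ι) (fun j : Fin n => if j = ⟨0, hn⟩ then Finset.univ else ∅) := by
    constructor
    · intro i j hij
      rcases eq_or_ne i ⟨0, hn⟩ with hi | hi
      · have hj : j ≠ ⟨0, hn⟩ := by rw [hi] at hij; exact hij.symm
        simp [hi, hj]
      · simp [hi]
    · apply Finset.Subset.antisymm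
      · intro b _
        exact Finset.mem_univ b
      · intro b _
        exact Finset.mem_biUnion.mpr ⟨⟨0, hn⟩, Finset.mem_univ _, by simp⟩
  have hfne : Sf.Nonempty := ⟨_, _, hA0, rfl⟩
  have hmem : sSup Sf ∈ Sf := hfne.csSup_mem hff
  obtain ⟨A, hApart, hAeq⟩ := hmem
  have hx0 : (⨅ j, g (A j)) ∈ Sg := ⟨A, hApart, rfl⟩
  have hle1 : (⨅ j, g (A j)) ≤ MMS Finset.univ g n := by
    rw [MMS]
    exact le_csSup hgf.bddAbove hx0
  have hbdd : BddBelow (Set.range (fun j => f (A j))) := (Set.finite_range _).bddBelow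
  have hle2 : (3 / 4 : ℝ) * (⨅ j, f (A j)) / D ≤ ⨅ j, g (A j) := by
    apply le_ciInf
    intro j
    have h1 : (⨅ j, f (A j)) ≤ f (A j) := ciInf_le hbdd j
    have h2 : f (A j) / D ≤ g (A j) := hgge (A j)
    have h3 : (3 / 4 : ℝ) * (⨅ j, f (A j)) / D ≤ (3 / 4 : ℝ) * f (A j) / D := by
      gcongr
    have h4 : (3 / 4 : ℝ) * f (A j) / D ≤ f (A j) / D := by
      have h0 := hnonneg (A j)
      gcongr
      linarith
    linarith
  have hMf : MMS Finset.univ f n = ⨅ j, f (A j) := by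
    rw [MMS]; exact hAeq
  rw [hMf]
  linarith
end

section
/- Let f be a monotone submodular valuation on subsets of a finite set, let k ≥ 1, and let S_1, …, S_k be pairwise disjoint sets with f(S_i) ≥ 1 for every i. Let S ⊆ S_1 ∪ … ∪ S_k be a set with f(S) < 1/3. Then Σ_{e ∈ (S_1 ∪ … ∪ S_k) \ S} ( f(S ∪ {e}) − f(S) ) > 2k/3. -/
/-- A valuation is submodular. -/
def SubmodularVal {ι : Type*} [DecidableEq ι] (V : Finset ι → ℝ) : Prop :=
  ∀ A B : Finset ι, V (A ∪ B) + V (A ∩ B) ≤ V A + V B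

lemma submodular_union_le {ι : Type*} [DecidableEq ι] (f : Finset ι → ℝ)
    (hmono : ∀ A B : Finset ι, A ⊆ B → f A ≤ f B)
    (hsubm : SubmodularVal f) (A : Finset ι) :
    ∀ B : Finset ι, f (A ∪ B) ≤ f A + ∑ e ∈ B \ A, (f (insert e A) - f A) := by
  intro B
  induction B using Finset.induction_on with
  | empty => simp
  | @insert a B ha ih =>
    by_cases haA : a ∈ A
    · have h1 : A ∪ insert a B = A ∪ B := by
        ext x; by_cases hx : x = a <;> simp [hx, haA]
      have h2 : insert a B \ A = B \ A := by
        ext x; by_cases hx : x = a <;> simp [hx, haA]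
      rw [h1, h2]; exact ih
    · have key := hsubm (A ∪ B) (insert a A)
      have hint : A ⊆ (A ∪ B) ∩ insert a A := by
        intro x hx; simp [hx]
      have hU : (A ∪ B) ∪ insert a A = A ∪ insert a B := by
        ext x; simp; tauto
      rw [hU] at key
      have h3 : f (A ∪ insert a B) ≤ f (A ∪ B) + f (insert a A) - f A := by
        have := hmono _ _ hint
        linarith
      have h4 : insert a B \ A = insert a (B \ A) := by
        ext x; by_cases hx : x = a <;> simp [hx, haA]
      rw [h4, Finset.sum_insert (by simp [ha])]
      linarith

/-- For a monotone submodular valuation `f`, pairwise disjoint sets `S i` each of value at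
least `1`, and a subset `T` of their union with `f T < 1/3`, the total marginal gain of the
elements outside `T` exceeds `2k/3`. -/
theorem submodular_marginal_gain {ι : Type*} [DecidableEq ι]
    (f : Finset ι → ℝ)
    (hmono : ∀ A B : Finset ι, A ⊆ B → f A ≤ f B)
    (hsubm : SubmodularVal f)
    {k : ℕ} (hk : 1 ≤ k)
    (S : Fin k → Finset ι) (hdisj : ∀ i j, i ≠ j → Disjoint (S i) (S j))
    (hval : ∀ i, 1 ≤ f (S i))
    (T : Finset ι) (hT : T ⊆ Finset.univ.biUnion S) (hfT : f T < 1 / 3) :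
    (2 * k : ℝ) / 3 < ∑ e ∈ Finset.univ.biUnion S \ T, (f (insert e T) - f T) := by
  have hset : Finset.univ.biUnion S \ T = Finset.univ.biUnion (fun i => S i \ T) := by
    ext x; simp [Finset.mem_biUnion]
  rw [hset, Finset.sum_biUnion (fun i _ j _ hij =>
    Finset.disjoint_of_subset_left (Finset.sdiff_subset)
      (Finset.disjoint_of_subset_right (Finset.sdiff_subset) (hdisj i j hij)))]
  have hlow : ∀ i : Fin k, (2:ℝ)/3 < ∑ e ∈ S i \ T, (f (insert e T) - f T) := by
    intro i
    have h1 := submodular_union_le f hmono hsubm T (S i)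
    have h2 : 1 ≤ f (T ∪ S i) := le_trans (hval i) (hmono _ _ Finset.subset_union_right)
    linarith
  calc (2 * k : ℝ) / 3 = ∑ _i : Fin k, (2:ℝ)/3 := by
        simp [Finset.sum_const]; ring
    _ < _ := Finset.sum_lt_sum_of_nonempty
        (Finset.univ_nonempty_iff.mpr (Fin.pos_iff_nonempty.mp hk)) (fun i _ => hlow i)
end

section
/- Let f be an XOS valuation on subsets of a finite set, let S be a subset of its ground set, and let S_1, …, S_k be pairwise disjoint (possibly empty) sets with S_1 ∪ … ∪ S_k = S. Then Σ_{i = 1}^{k} ( f(S) − f(S \ S_i) ) ≤ f(S). -/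
/-- For an XOS valuation `f` and a partition of `S` into pairwise disjoint (possibly empty)
parts `P 1, …, P k`: `Σ_i (f S − f (S \ P i)) ≤ f S`. -/
theorem xos_partition_marginals {ι : Type*} [DecidableEq ι]
    (f : Finset ι → ℝ) (hf : IsXOS f)
    (S : Finset ι) {k : ℕ} (P : Fin k → Finset ι)
    (hdisj : ∀ i j, i ≠ j → Disjoint (P i) (P j))
    (hunion : Finset.univ.biUnion P = S) :
    ∑ i, (f S - f (S \ P i)) ≤ f S := by
  obtain ⟨m, w, hw, hV⟩ := hf
  obtain ⟨i0, -, hi0⟩ := Finset.exists_mem_eq_sup' (Finset.univ_nonempty (α := Fin (m + 1)))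
    (fun i => ∑ b ∈ S, w i b)
  have hfS : f S = ∑ b ∈ S, w i0 b := by rw [hV]; exact hi0
  have hsub : ∀ j, P j ⊆ S := fun j => hunion ▸ Finset.subset_biUnion_of_mem P (Finset.mem_univ j)
  have key : ∀ j, f S - f (S \ P j) ≤ ∑ b ∈ P j, w i0 b := by
    intro j
    have h1 : ∑ b ∈ S \ P j, w i0 b ≤ f (S \ P j) := by
      rw [hV]
      exact Finset.le_sup' (fun i => ∑ b ∈ S \ P j, w i b) (Finset.mem_univ i0)
    have h2 : ∑ b ∈ S \ P j, w i0 b + ∑ b ∈ P j, w i0 b = ∑ b ∈ S, w i0 b :=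
      Finset.sum_sdiff (hsub j)
    rw [hfS]
    linarith
  calc ∑ i, (f S - f (S \ P i)) ≤ ∑ i, ∑ b ∈ P i, w i0 b :=
        Finset.sum_le_sum fun i _ => key i
    _ = ∑ b ∈ Finset.univ.biUnion P, w i0 b :=
        (Finset.sum_biUnion (fun i _ j _ hij => hdisj i j hij)).symm
    _ = f S := by rw [hunion, hfS]
end

section
/- Let M be a finite set of items, n ≥ 1 an integer, and let f be an XOS valuation on subsets of M such that MMS_f^n(M) ≥ 1 and f({b}) < 1/5 for every item b ∈ M. Then M can be partitioned into 2n pairwise disjoint bundles S_1, …, S_{2n} with union M such that f(S_j) ≥ 2/5 for every j ∈ {1, …, 2n}. -/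
/-- Splitting lemma for additive valuations: if the total is at least 1 and each
item is worth less than 1/5, the set splits into two halves each worth at least 2/5. -/
lemma split_additive {ι : Type*} [DecidableEq ι] (g : ι → ℝ)
    (T : Finset ι) (hT : 1 ≤ ∑ b ∈ T, g b) (hsmall : ∀ b, g b < 1/5) :
    ∃ U, U ⊆ T ∧ 2/5 ≤ ∑ b ∈ U, g b ∧ 2/5 ≤ ∑ b ∈ T \ U, g b := by
  classical
  set S := (T.powerset).filter (fun U => 2/5 ≤ ∑ b ∈ U, g b) with hS
  have hTS : T ∈ S := by
    simp only [hS, Finset.mem_filter, Finset.mem_powerset]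
    exact ⟨subset_rfl, by linarith⟩
  obtain ⟨U, hU, hmin⟩ := S.exists_min_image (fun U => U.card) ⟨T, hTS⟩
  simp only [hS, Finset.mem_filter, Finset.mem_powerset] at hU
  obtain ⟨hUT, hUsum⟩ := hU
  have hUne : U.Nonempty := by
    rcases U.eq_empty_or_nonempty with h | h
    · exfalso; rw [h] at hUsum; simp at hUsum; linarith
    · exact h
  obtain ⟨b, hb⟩ := hUne
  have herase : ∑ x ∈ U.erase b, g x < 2/5 := by
    by_contra h
    push_neg at h
    have hmem : U.erase b ∈ S := by
      simp only [hS, Finset.mem_filter, Finset.mem_powerset]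
      exact ⟨(U.erase_subset b).trans hUT, h⟩
    have h1 := hmin _ hmem
    have h2 := Finset.card_erase_lt_of_mem hb
    omega
  have hsumU : g b + ∑ x ∈ U.erase b, g x = ∑ x ∈ U, g x :=
    Finset.add_sum_erase U g hb
  have hU3 : ∑ x ∈ U, g x < 3/5 := by
    have := hsmall b; linarith
  have hsd : ∑ x ∈ T \ U, g x = ∑ x ∈ T, g x - ∑ x ∈ U, g x :=
    Finset.sum_sdiff_eq_sub hUT
  exact ⟨U, hUT, hUsum, by linarith⟩

/-- If an XOS valuation has maximin share at least `1` for `n` bundles and every single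
item is worth less than `1/5`, then the items can be split into `2n` bundles each worth
at least `2/5`. -/
theorem xos_split_into_2n_bundles {ι : Type*} [Fintype ι] [DecidableEq ι]
    {n : ℕ} (hn : 1 ≤ n) (f : Finset ι → ℝ) (hf : IsXOS f)
    (hmms : 1 ≤ MMS Finset.univ f n)
    (hsmall : ∀ b : ι, f {b} < 1 / 5) :
    ∃ A : Fin (2 * n) → Finset ι, IsPartition (Finset.univ : Finset ι) A ∧
      ∀ j, (2 / 5 : ℝ) ≤ f (A j) := by
  classical
  obtain ⟨k, w, hw, hfe⟩ := hf
  -- the MMS supremum is attained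
  set P := { x : ℝ | ∃ A : Fin n → Finset ι, IsPartition (Finset.univ : Finset ι) A ∧
      x = ⨅ j, f (A j) } with hP
  have hPfin : P.Finite := by
    apply (Set.finite_range (fun A : Fin n → Finset ι => ⨅ j, f (A j))).subset
    rintro x ⟨A, _, rfl⟩
    exact ⟨A, rfl⟩
  have hPne : P.Nonempty := by
    refine ⟨_, fun j => if j = (⟨0, hn⟩ : Fin n) then Finset.univ else ∅, ?_, rfl⟩
    constructor
    · intro i j hij
      by_cases hi : i = (⟨0, hn⟩ : Fin n)
      · have hj : j ≠ (⟨0, hn⟩ : Fin n) := by rw [hi] at hij; exact hij.symm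
        simp [hi, hj]
      · simp [hi]
    · apply Finset.eq_univ_iff_forall.mpr
      intro x
      exact Finset.mem_biUnion.mpr ⟨⟨0, hn⟩, Finset.mem_univ _, by simp⟩
  have hmem : sSup P ∈ P := hPne.csSup_mem hPfin
  obtain ⟨A, hApart, hAeq⟩ := hmem
  have hA1 : ∀ j, (1 : ℝ) ≤ f (A j) := by
    intro j
    have hbdd : BddBelow (Set.range fun j => f (A j)) :=
      (Set.finite_range _).bddBelow
    have h1 : (1 : ℝ) ≤ ⨅ j, f (A j) := by
      rw [← hAeq]; exact hmms
    exact le_trans h1 (ciInf_le hbdd j)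
  -- pick an additive witness for each bundle
  have hwit : ∀ j : Fin n, ∃ i : Fin (k + 1), f (A j) = ∑ b ∈ A j, w i b := by
    intro j
    obtain ⟨i, _, hi⟩ := Finset.exists_mem_eq_sup' Finset.univ_nonempty
      (fun i => ∑ b ∈ A j, w i b)
    exact ⟨i, (hfe (A j)).trans hi⟩
  choose φ hφ using hwit
  have hdom : ∀ (i : Fin (k+1)) (S : Finset ι), ∑ b ∈ S, w i b ≤ f S := by
    intro i S
    rw [hfe S]
    exact Finset.le_sup' (fun i => ∑ b ∈ S, w i b) (Finset.mem_univ i)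
  have hwsmall : ∀ (i : Fin (k+1)) (b : ι), w i b < 1/5 := by
    intro i b
    have := hdom i {b}
    simp only [Finset.sum_singleton] at this
    have := hsmall b
    linarith
  -- split each bundle
  have hsplit : ∀ j : Fin n, ∃ U, U ⊆ A j ∧ 2/5 ≤ ∑ b ∈ U, w (φ j) b ∧
      2/5 ≤ ∑ b ∈ A j \ U, w (φ j) b := by
    intro j
    apply split_additive (w (φ j)) (A j)
    · rw [← hφ j]; exact hA1 j
    · exact hwsmall (φ j)
  choose U hUsub hUlo hUhi using hsplit
  -- index helper
  have hidx : ∀ j : Fin (2 * n), (if j.val < n then j.val else j.val - n) < n := by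
    intro j
    have := j.2
    split_ifs with h <;> omega
  set idx : Fin (2 * n) → Fin n := fun j => ⟨if j.val < n then j.val else j.val - n, hidx j⟩
    with hidxdef
  set B : Fin (2 * n) → Finset ι :=
    fun j => if j.val < n then U (idx j) else A (idx j) \ U (idx j) with hB
  have hBsub : ∀ j, B j ⊆ A (idx j) := by
    intro j
    simp only [hB]
    split_ifs
    · exact hUsub _
    · exact Finset.sdiff_subset
  refine ⟨B, ⟨?_, ?_⟩, ?_⟩
  · -- pairwise disjoint
    intro j j' hjj'
    by_cases hidxeq : idx j = idx j'
    · -- same underlying bundle: one is U, the other its complement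
      have hvv : j.val ≠ j'.val := fun h => hjj' (Fin.ext h)
      have hj2 := j.2; have hj'2 := j'.2
      rcases lt_or_ge j.val n with h1 | h1 <;> rcases lt_or_ge j'.val n with h2 | h2
      · exfalso
        apply hvv
        have : (idx j).val = (idx j').val := by rw [hidxeq]
        simpa [hidxdef, h1, h2] using this
      · simp only [hB, if_pos h1, if_neg (not_lt.mpr h2)]
        rw [hidxeq]
        exact Finset.disjoint_sdiff
      · simp only [hB, if_neg (not_lt.mpr h1), if_pos h2]
        rw [hidxeq]
        exact Finset.disjoint_sdiff.symm
      · exfalso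
        apply hvv
        have : (idx j).val = (idx j').val := by rw [hidxeq]
        simp only [hidxdef, if_neg (not_lt.mpr h1), if_neg (not_lt.mpr h2)] at this
        omega
    · exact (hApart.1 _ _ hidxeq).mono (hBsub j) (hBsub j')
  · -- union is everything
    apply Finset.eq_univ_iff_forall.mpr
    intro x
    have hx : x ∈ Finset.univ.biUnion A := by rw [hApart.2]; exact Finset.mem_univ x
    obtain ⟨i, _, hxi⟩ := Finset.mem_biUnion.mp hx
    by_cases hxU : x ∈ U i
    · refine Finset.mem_biUnion.mpr ⟨⟨i.val, by omega⟩, Finset.mem_univ _, ?_⟩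
      have hlt : (⟨i.val, by omega⟩ : Fin (2 * n)).val < n := i.2
      have hidxi : idx ⟨i.val, by omega⟩ = i := by
        apply Fin.ext
        show (if i.val < n then i.val else i.val - n) = i.val
        rw [if_pos i.2]
      simp only [hB, if_pos hlt, hidxi]
      exact hxU
    · have hi2 := i.2
      refine Finset.mem_biUnion.mpr ⟨⟨i.val + n, by omega⟩, Finset.mem_univ _, ?_⟩
      have hnlt : ¬ (⟨i.val + n, by omega⟩ : Fin (2 * n)).val < n := by
        simp only [not_lt]; omega
      have hidxi : idx ⟨i.val + n, by omega⟩ = i := by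
        apply Fin.ext
        show (if i.val + n < n then i.val + n else i.val + n - n) = i.val
        rw [if_neg (by omega)]
        omega
      simp only [hB, if_neg hnlt, hidxi, Finset.mem_sdiff]
      exact ⟨hxi, hxU⟩
  · -- each bundle worth at least 2/5
    intro j
    simp only [hB]
    split_ifs
    · exact le_trans (hUlo (idx j)) (hdom (φ (idx j)) _)
    · exact le_trans (hUhi (idx j)) (hdom (φ (idx j)) _)
end

section
/- Let M be a finite set of items, let f be a monotone valuation on subsets of M, let n ≥ 2 be an integer, and let b ∈ M be any item. Then MMS_f^{n−1}(M \ {b}) ≥ MMS_f^n(M). (This is the key claim proved inside Lemma 'remove1': removing one item from the instance and one agent does not decrease any remaining agent's maximin share.) -/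
/-- Removing any single item together with one agent does not decrease the maximin share of
a monotone valuation: `MMS_f^{n−1}(M \ {b}) ≥ MMS_f^n(M)` for `n ≥ 2`. -/
theorem MMS_erase_item {ι : Type*} [Fintype ι] [DecidableEq ι]
    (f : Finset ι → ℝ) (hmono : ∀ S T : Finset ι, S ⊆ T → f S ≤ f T)
    {n : ℕ} (hn : 2 ≤ n) (b : ι) :
    MMS Finset.univ f n ≤ MMS (Finset.univ.erase b) f (n - 1) := by
  obtain ⟨m, rfl⟩ : ∃ m, n = m + 2 := ⟨n - 2, by omega⟩
  show MMS Finset.univ f (m + 2) ≤ MMS (Finset.univ.erase b) f (m + 1)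
  -- the target set is bounded above by `f univ`
  have hbdd : BddAbove { x : ℝ | ∃ A : Fin (m + 1) → Finset ι,
      IsPartition (Finset.univ.erase b) A ∧ x = ⨅ j, f (A j) } := by
    refine ⟨f Finset.univ, ?_⟩
    rintro y ⟨C, _, rfl⟩
    exact le_trans (ciInf_le (Set.Finite.bddBelow (Set.finite_range _)) 0)
      (hmono _ _ (Finset.subset_univ _))
  refine csSup_le ⟨_, (fun j : Fin (m + 2) =>
      if j = 0 then (Finset.univ : Finset ι) else ∅), ⟨?_, ?_⟩, rfl⟩ ?_
  · intro i j hij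
    dsimp only
    split_ifs with h1 h2 h2 <;> simp_all
  · exact Finset.eq_univ_iff_forall.mpr
      (fun x => Finset.mem_biUnion.mpr ⟨0, Finset.mem_univ 0, by simp⟩)
  · rintro x ⟨A, ⟨hd, hu⟩, rfl⟩
    -- find the bundle containing b
    have hbmem : b ∈ Finset.univ.biUnion A := by rw [hu]; exact Finset.mem_univ b
    obtain ⟨i0, -, hbi0⟩ := Finset.mem_biUnion.mp hbmem
    set σ : Fin (m + 1) → Fin (m + 2) := i0.succAbove with hσ
    have hσne : ∀ k, σ k ≠ i0 := fun k => Fin.succAbove_ne i0 k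
    have hσinj : Function.Injective σ := Fin.succAbove_right_injective
    set B : Fin (m + 1) → Finset ι := fun k =>
      if k = 0 then A (σ 0) ∪ (A i0).erase b else A (σ k) with hB
    have hsub : ∀ k, A (σ k) ⊆ B k := by
      intro k
      by_cases hk : k = 0
      · subst hk; simp [hB]
      · simp [hB, hk]
    have hBpart : IsPartition (Finset.univ.erase b) B := by
      constructor
      · intro k l hkl
        have hσkl : σ k ≠ σ l := fun h => hkl (hσinj h)
        by_cases hk : k = 0 <;> by_cases hl : l = 0
        · exact absurd (hk.trans hl.symm) hkl
        · subst hk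
          simp only [hB, if_pos rfl, if_neg hl]
          refine Finset.disjoint_union_left.mpr ⟨hd _ _ hσkl, ?_⟩
          exact Disjoint.mono_left (Finset.erase_subset _ _) (hd _ _ (hσne l).symm)
        · subst hl
          simp only [hB, if_pos rfl, if_neg hk]
          refine (Finset.disjoint_union_left.mpr ⟨hd _ _ hσkl.symm, ?_⟩).symm
          exact Disjoint.mono_left (Finset.erase_subset _ _) (hd _ _ (hσne k).symm)
        · simp only [hB, if_neg hk, if_neg hl]
          exact hd _ _ hσkl
      · ext x
        simp only [Finset.mem_biUnion, Finset.mem_univ, true_and, Finset.mem_erase]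
        constructor
        · rintro ⟨k, hk⟩
          have hxb : x ≠ b := by
            by_cases h0 : k = 0
            · subst h0
              simp only [hB, if_pos rfl, Finset.mem_union, Finset.mem_erase] at hk
              rcases hk with hk | hk
              · exact fun h => Finset.disjoint_left.mp (hd _ _ (hσne 0)) hk (h ▸ hbi0)
              · exact hk.1
            · simp only [hB, if_neg h0] at hk
              exact fun h => Finset.disjoint_left.mp (hd _ _ (hσne k)) hk (h ▸ hbi0)
          exact ⟨hxb, trivial⟩
        · rintro ⟨hxb, -⟩
          have hx : x ∈ Finset.univ.biUnion A := by rw [hu]; exact Finset.mem_univ x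
          obtain ⟨j, -, hxj⟩ := Finset.mem_biUnion.mp hx
          by_cases hj : j = i0
          · subst hj
            refine ⟨0, ?_⟩
            simp only [hB, if_pos rfl, Finset.mem_union, Finset.mem_erase]
            exact Or.inr ⟨hxb, hxj⟩
          · obtain ⟨k, hk⟩ := Fin.exists_succAbove_eq hj
            exact ⟨k, hsub k (by rw [hσ, hk]; exact hxj)⟩
    refine le_trans ?_ (le_csSup hbdd ⟨B, hBpart, rfl⟩)
    refine le_ciInf (fun k => ?_)
    exact le_trans (ciInf_le (Set.Finite.bddBelow (Set.finite_range _)) (σ k))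
      (hmono _ _ (hsub k))
end

section
/- Let V be an additive valuation on subsets of a finite set M (given by a nonnegative weight function) and let X, Y, Z be pairwise disjoint subsets of M such that: V({b}) < 4/5 for every item b ∈ Z; V(X) < 4/5; V(Y) < 4/5; and V(X ∪ Y ∪ Z) > 16/5. Then there exists a subset Z' ⊆ Z such that V(Z \ Z') ≥ 4/5, V(X ∪ Z') ≥ 4/5, and V(Y ∪ Z') ≥ 4/5. -/
/-- A valuation is additive if it is given by a nonnegative weight function. -/
def IsAdditive {ι : Type*} (V : Finset ι → ℝ) : Prop :=
  ∃ w : ι → ℝ, (∀ b, 0 ≤ w b) ∧ ∀ S : Finset ι, V S = ∑ b ∈ S, w b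

/-- Auxiliary: from a set whose items each weigh less than `4/5` and whose total weight is
at least `t ≥ 0`, one can extract a subset of weight in `[t, t + 4/5)`. -/
lemma exists_subset_sum_lt {ι : Type*} [DecidableEq ι] (w : ι → ℝ) (hw : ∀ b, 0 ≤ w b)
    (Z : Finset ι) (hitem : ∀ b ∈ Z, w b < 4 / 5) (t : ℝ) (ht : 0 ≤ t)
    (hZ : t ≤ ∑ b ∈ Z, w b) :
    ∃ Z' ⊆ Z, t ≤ ∑ b ∈ Z', w b ∧ ∑ b ∈ Z', w b < t + 4 / 5 := by
  classical
  set S := Z.powerset.filter (fun s => t ≤ ∑ b ∈ s, w b) with hS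
  have hne : S.Nonempty := ⟨Z, by simp [hS, hZ]⟩
  obtain ⟨Z', hZ'S, hmin⟩ := S.exists_min_image Finset.card hne
  simp only [hS, Finset.mem_filter, Finset.mem_powerset] at hZ'S
  refine ⟨Z', hZ'S.1, hZ'S.2, ?_⟩
  rcases Z'.eq_empty_or_nonempty with h | ⟨b, hb⟩
  · simp [h]; linarith
  · have hlt : ∑ x ∈ Z'.erase b, w x < t := by
      by_contra hge
      push_neg at hge
      have hmem : Z'.erase b ∈ S := by
        simp only [hS, Finset.mem_filter, Finset.mem_powerset]
        exact ⟨(Finset.erase_subset _ _).trans hZ'S.1, hge⟩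
      have := hmin _ hmem
      have hcard : (Z'.erase b).card < Z'.card := Finset.card_erase_lt_of_mem hb
      omega
    have hsum : ∑ x ∈ Z', w x = w b + ∑ x ∈ Z'.erase b, w x :=
      (Finset.add_sum_erase _ _ hb).symm
    have hwb : w b < 4 / 5 := hitem b (hZ'S.1 hb)
    linarith

/-- Lemma `3p`: if `V X, V Y < 4/5`, every item of `Z` is worth less than `4/5`, and
`V (X ∪ Y ∪ Z) > 16/5`, then some items can be moved from `Z` so that `Z` keeps value at
least `4/5` and the moved items make both `X` and `Y` worth at least `4/5`. -/
theorem move_items_from_Z {ι : Type*} [DecidableEq ι]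
    (V : Finset ι → ℝ) (hV : IsAdditive V)
    (X Y Z : Finset ι)
    (hXY : Disjoint X Y) (hXZ : Disjoint X Z) (hYZ : Disjoint Y Z)
    (hZitem : ∀ b ∈ Z, V {b} < 4 / 5)
    (hX : V X < 4 / 5) (hY : V Y < 4 / 5)
    (htot : 16 / 5 < V (X ∪ Y ∪ Z)) :
    ∃ Z' ⊆ Z, (4 / 5 : ℝ) ≤ V (Z \ Z') ∧
      (4 / 5 : ℝ) ≤ V (X ∪ Z') ∧ (4 / 5 : ℝ) ≤ V (Y ∪ Z') := by
  obtain ⟨w, hw, hVw⟩ := hV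
  have hnonneg : ∀ S : Finset ι, 0 ≤ V S := fun S => by
    rw [hVw]; exact Finset.sum_nonneg fun b _ => hw b
  have hitem : ∀ b ∈ Z, w b < 4 / 5 := fun b hb => by
    have := hZitem b hb; rwa [hVw, Finset.sum_singleton] at this
  have hXYZ : V (X ∪ Y ∪ Z) = V X + V Y + V Z := by
    simp only [hVw]
    rw [Finset.sum_union (by simpa using ⟨hXZ, hYZ⟩), Finset.sum_union hXY]
  set n := min (V X) (V Y) with hn
  have hn0 : 0 ≤ n := le_min (hnonneg X) (hnonneg Y)
  have hnX : n ≤ V X := min_le_left _ _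
  have hnY : n ≤ V Y := min_le_right _ _
  have hZbig : 4 / 5 - n ≤ ∑ b ∈ Z, w b := by
    have : V Z = ∑ b ∈ Z, w b := hVw Z
    linarith
  obtain ⟨Z', hZ'Z, hlow, hhigh⟩ :=
    exists_subset_sum_lt w hw Z hitem (4 / 5 - n) (by linarith) hZbig
  have hsdiff : V (Z \ Z') = V Z - ∑ b ∈ Z', w b := by
    simp only [hVw]
    rw [eq_sub_iff_add_eq, Finset.sum_sdiff hZ'Z]
  have hXZ' : V (X ∪ Z') = V X + ∑ b ∈ Z', w b := by
    simp only [hVw]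
    exact Finset.sum_union (hXZ.mono_right hZ'Z)
  have hYZ' : V (Y ∪ Z') = V Y + ∑ b ∈ Z', w b := by
    simp only [hVw]
    exact Finset.sum_union (hYZ.mono_right hZ'Z)
  have hmax : V X + V Y - n < 4 / 5 := by
    rcases min_cases (V X) (V Y) with ⟨h1, _⟩ | ⟨h1, _⟩ <;> rw [hn, h1] <;> linarith
  exact ⟨Z', hZ'Z, by linarith, by linarith, by linarith⟩
end

section
/- Let X, Y, Z be pairwise disjoint finite sets of items and let V_1, V_2, V_3 be additive valuations on subsets of X ∪ Y ∪ Z (each given by a nonnegative weight function) such that: V_1(X) ≥ 4/5, V_1(Y) ≥ 4/5, V_1(Z) ≥ 4/5; V_2(X ∪ Y ∪ Z) > 16/5; V_3(X ∪ Y ∪ Z) ≥ 3; and V_2({b}) < 4/5 for every item b ∈ X ∪ Y ∪ Z. Then there exists a partition of X ∪ Y ∪ Z into three pairwise disjoint bundles P_1, P_2, P_3 with union X ∪ Y ∪ Z such that V_i(P_i) ≥ 4/5 for every i ∈ {1, 2, 3}. -/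
/-- Sublemma: a bundle `C` with `w₂`-value more than `8/5`, all items `w₂`-small,
can be split into `T` (with `w₃`-value at least `τ`) and `C \ T` (with `w₂`-value
at least `4/5`), provided `τ ≤ 4/5` and `τ ≤ (w₃ C)/2 - 7/10`. -/
lemma split_heavy_bundle {ι : Type*} [DecidableEq ι] (C : Finset ι) (w₂ w₃ : ι → ℝ)
    (hw3 : ∀ b, 0 ≤ w₃ b)
    (hitem : ∀ b ∈ C, w₂ b < 4 / 5)
    (hC2 : 8 / 5 < ∑ b ∈ C, w₂ b)
    (τ : ℝ) (hτ0 : 0 < τ) (hτ1 : τ ≤ 4 / 5)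
    (hτ2 : τ ≤ (∑ b ∈ C, w₃ b) / 2 - 7 / 10) :
    ∃ T ⊆ C, τ ≤ ∑ b ∈ T, w₃ b ∧ 4 / 5 ≤ ∑ b ∈ C \ T, w₂ b := by
  by_contra hcon
  push_neg at hcon
  have h : ∀ T ⊆ C, τ ≤ ∑ b ∈ T, w₃ b → ∑ b ∈ C \ T, w₂ b < 4 / 5 := by
    intro T hT hT3
    exact hcon T hT hT3
  set F := C.powerset.filter (fun T => τ ≤ ∑ b ∈ T, w₃ b) with hF
  have hCF : C ∈ F := by
    simp only [hF, Finset.mem_filter, Finset.mem_powerset]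
    exact ⟨subset_rfl, by linarith⟩
  obtain ⟨T, hTF, hmin⟩ := F.exists_min_image Finset.card ⟨C, hCF⟩
  simp only [hF, Finset.mem_filter, Finset.mem_powerset] at hTF
  obtain ⟨hTC, hT3⟩ := hTF
  have hsd2 : ∑ b ∈ C \ T, w₂ b + ∑ b ∈ T, w₂ b = ∑ b ∈ C, w₂ b :=
    Finset.sum_sdiff hTC
  have hcompl2 : ∑ b ∈ C \ T, w₂ b < 4 / 5 := h T hTC hT3
  have hT2 : 4 / 5 < ∑ b ∈ T, w₂ b := by linarith
  have hsd3 : ∑ b ∈ C \ T, w₃ b + ∑ b ∈ T, w₃ b = ∑ b ∈ C, w₃ b :=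
    Finset.sum_sdiff hTC
  have hcompl3 : ∑ b ∈ C \ T, w₃ b < τ := by
    by_contra h3
    push_neg at h3
    have := h (C \ T) (Finset.sdiff_subset) h3
    rw [Finset.sdiff_sdiff_eq_self hTC] at this
    linarith
  have hT3' : τ + 7 / 5 < ∑ b ∈ T, w₃ b := by linarith
  have hne : T.Nonempty := by
    rcases T.eq_empty_or_nonempty with rfl | hne
    · simp at hT2; linarith
    · exact hne
  obtain ⟨e, he⟩ := hne
  have herase : ∀ x ∈ T, ∑ b ∈ T.erase x, w₃ b < τ := by
    intro x hx
    by_contra hc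
    push_neg at hc
    have hmem : T.erase x ∈ F := by
      simp only [hF, Finset.mem_filter, Finset.mem_powerset]
      exact ⟨(Finset.erase_subset x T).trans hTC, hc⟩
    have h1 := hmin _ hmem
    have h2 := Finset.card_erase_lt_of_mem hx
    omega
  have hbig : ∀ x ∈ T, 7 / 5 < w₃ x := by
    intro x hx
    have h1 := herase x hx
    have h2 : ∑ b ∈ T.erase x, w₃ b + w₃ x = ∑ b ∈ T, w₃ b :=
      Finset.sum_erase_add T _ hx
    linarith
  rcases (T.erase e).eq_empty_or_nonempty with hemp | ⟨f, hf⟩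
  · have hTe : T = {e} := by
      rcases (Finset.erase_eq_empty_iff T e).mp hemp with h' | h'
      · exact absurd (h' ▸ he) (Finset.notMem_empty e)
      · exact h'
    rw [hTe, Finset.sum_singleton] at hT2
    exact absurd hT2 (not_lt.mpr (le_of_lt (hitem e (hTC he))))
  · have hfe : f ∈ T := Finset.mem_of_mem_erase hf
    have h1 : w₃ f ≤ ∑ b ∈ T.erase e, w₃ b :=
      Finset.single_le_sum (fun i _ => hw3 i) hf
    have h2 := herase e he
    have h3 := hbig f hfe
    linarith

/-- Main combinatorial lemma, assuming the bundles are ordered so that `C` has the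
largest `w₃`-value and `B` the smallest. -/
lemma repartition_ordered {ι : Type*} [DecidableEq ι] (A B C U : Finset ι)
    (hU : A ∪ B ∪ C = U)
    (hAB : Disjoint A B) (hAC : Disjoint A C) (hBC : Disjoint B C)
    (w₁ w₂ w₃ : ι → ℝ)
    (hw1 : ∀ b, 0 ≤ w₁ b) (hw2 : ∀ b, 0 ≤ w₂ b) (hw3 : ∀ b, 0 ≤ w₃ b)
    (hA1 : 4 / 5 ≤ ∑ b ∈ A, w₁ b) (hB1 : 4 / 5 ≤ ∑ b ∈ B, w₁ b)
    (hC1 : 4 / 5 ≤ ∑ b ∈ C, w₁ b)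
    (h2 : 16 / 5 < ∑ b ∈ U, w₂ b) (h3 : 3 ≤ ∑ b ∈ U, w₃ b)
    (hitem : ∀ b ∈ U, w₂ b < 4 / 5)
    (hAC3 : ∑ b ∈ A, w₃ b ≤ ∑ b ∈ C, w₃ b)
    (hBC3 : ∑ b ∈ B, w₃ b ≤ ∑ b ∈ C, w₃ b)
    (hBA3 : ∑ b ∈ B, w₃ b ≤ ∑ b ∈ A, w₃ b) :
    ∃ P₁ P₂ P₃ : Finset ι,
      Disjoint P₁ P₂ ∧ Disjoint P₁ P₃ ∧ Disjoint P₂ P₃ ∧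
      P₁ ∪ P₂ ∪ P₃ = U ∧
      4 / 5 ≤ ∑ b ∈ P₁, w₁ b ∧ 4 / 5 ≤ ∑ b ∈ P₂, w₂ b ∧ 4 / 5 ≤ ∑ b ∈ P₃, w₃ b := by
  subst hU
  have dABC : Disjoint (A ∪ B) C := Finset.disjoint_union_left.mpr ⟨hAC, hBC⟩
  have hsplit2 : ∑ b ∈ A ∪ B ∪ C, w₂ b
      = ∑ b ∈ A, w₂ b + ∑ b ∈ B, w₂ b + ∑ b ∈ C, w₂ b := by
    rw [Finset.sum_union dABC, Finset.sum_union hAB]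
  have hsplit3 : ∑ b ∈ A ∪ B ∪ C, w₃ b
      = ∑ b ∈ A, w₃ b + ∑ b ∈ B, w₃ b + ∑ b ∈ C, w₃ b := by
    rw [Finset.sum_union dABC, Finset.sum_union hAB]
  rw [hsplit2] at h2
  rw [hsplit3] at h3
  -- C has w₃-value at least 1
  have hC3one : 1 ≤ ∑ b ∈ C, w₃ b := by linarith
  by_cases hA2 : 4 / 5 ≤ ∑ b ∈ A, w₂ b
  · -- P₁ = B, P₂ = A, P₃ = C
    refine ⟨B, A, C, hAB.symm, hBC, hAC, ?_, hB1, hA2, by linarith⟩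
    ext x; simp only [Finset.mem_union]; tauto
  by_cases hB2 : 4 / 5 ≤ ∑ b ∈ B, w₂ b
  · -- P₁ = A, P₂ = B, P₃ = C
    refine ⟨A, B, C, hAB, hAC, hBC, rfl, hA1, hB2, by linarith⟩
  push_neg at hA2 hB2
  have hC2 : 8 / 5 < ∑ b ∈ C, w₂ b := by linarith
  by_cases hA3 : 4 / 5 ≤ ∑ b ∈ A, w₃ b
  · -- P₁ = B, P₂ = C, P₃ = A
    refine ⟨B, C, A, hBC, hAB.symm, hAC.symm, ?_, hB1, by linarith, hA3⟩
    ext x; simp only [Finset.mem_union]; tauto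
  push_neg at hA3
  have hC3 : 7 / 5 < ∑ b ∈ C, w₃ b := by linarith
  set τ : ℝ := min (4 / 5) ((∑ b ∈ C, w₃ b) / 2 - 7 / 10) with hτ
  have hτ0 : 0 < τ := lt_min (by norm_num) (by linarith)
  obtain ⟨T, hTC, hT3, hCT2⟩ := split_heavy_bundle C w₂ w₃ hw3
    (fun b hb => hitem b (Finset.mem_union_right _ hb)) hC2 τ hτ0
    (min_le_left _ _) (min_le_right _ _)
  -- P₁ = B, P₂ = C \ T, P₃ = T ∪ A
  have dTA : Disjoint T A := (hAC.symm.mono_left hTC)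
  have hP3 : 4 / 5 ≤ ∑ b ∈ T ∪ A, w₃ b := by
    rw [Finset.sum_union dTA]
    have hAhalf : τ + ∑ b ∈ A, w₃ b ≥ 4 / 5 := by
      rcases min_cases (4 / 5 : ℝ) ((∑ b ∈ C, w₃ b) / 2 - 7 / 10) with ⟨hm, hm'⟩ | ⟨hm, hm'⟩ <;>
        rw [hτ, hm] <;>
        [skip; skip] <;>
        first
          | (have hApos : 0 ≤ ∑ b ∈ A, w₃ b := Finset.sum_nonneg (fun i _ => hw3 i); linarith)
          | linarith
    linarith
  refine ⟨B, C \ T, T ∪ A, ?_, ?_, ?_, ?_, hB1, hCT2, hP3⟩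
  · exact hBC.mono_right Finset.sdiff_subset
  · exact Finset.disjoint_union_right.mpr ⟨hBC.mono_right hTC, hAB.symm⟩
  · refine Finset.disjoint_union_right.mpr ⟨Finset.sdiff_disjoint, hAC.symm.mono_left Finset.sdiff_subset⟩
  · ext x
    simp only [Finset.mem_union, Finset.mem_sdiff]
    have hx : x ∈ T → x ∈ C := fun h => hTC h
    by_cases hxT : x ∈ T <;> tauto

/-- Lemma `recurse`: three bundles `X, Y, Z`, each worth at least `4/5` to agent 1, whose
union is worth more than `16/5` to agent 2 (who values every single item below `4/5`) and
at least `3` to agent 3, can be repartitioned into three bundles satisfying all three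
agents at level `4/5`. -/
theorem three_agent_repartition {ι : Type*} [DecidableEq ι]
    (X Y Z : Finset ι)
    (hXY : Disjoint X Y) (hXZ : Disjoint X Z) (hYZ : Disjoint Y Z)
    (V₁ V₂ V₃ : Finset ι → ℝ)
    (h1 : IsAdditive V₁) (h2 : IsAdditive V₂) (h3 : IsAdditive V₃)
    (hV1X : 4 / 5 ≤ V₁ X) (hV1Y : 4 / 5 ≤ V₁ Y) (hV1Z : 4 / 5 ≤ V₁ Z)
    (hV2 : 16 / 5 < V₂ (X ∪ Y ∪ Z))
    (hV3 : 3 ≤ V₃ (X ∪ Y ∪ Z))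
    (hitem : ∀ b ∈ X ∪ Y ∪ Z, V₂ {b} < 4 / 5) :
    ∃ P₁ P₂ P₃ : Finset ι,
      Disjoint P₁ P₂ ∧ Disjoint P₁ P₃ ∧ Disjoint P₂ P₃ ∧
      P₁ ∪ P₂ ∪ P₃ = X ∪ Y ∪ Z ∧
      4 / 5 ≤ V₁ P₁ ∧ 4 / 5 ≤ V₂ P₂ ∧ 4 / 5 ≤ V₃ P₃ := by
  obtain ⟨w₁, hw1, hV1⟩ := h1
  obtain ⟨w₂, hw2, hV2'⟩ := h2
  obtain ⟨w₃, hw3, hV3'⟩ := h3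
  rw [hV1] at hV1X hV1Y hV1Z
  rw [hV2'] at hV2
  rw [hV3'] at hV3
  have hitem' : ∀ b ∈ X ∪ Y ∪ Z, w₂ b < 4 / 5 := by
    intro b hb
    have := hitem b hb
    rwa [hV2', Finset.sum_singleton] at this
  have finish : (∃ P₁ P₂ P₃ : Finset ι,
      Disjoint P₁ P₂ ∧ Disjoint P₁ P₃ ∧ Disjoint P₂ P₃ ∧
      P₁ ∪ P₂ ∪ P₃ = X ∪ Y ∪ Z ∧
      4 / 5 ≤ ∑ b ∈ P₁, w₁ b ∧ 4 / 5 ≤ ∑ b ∈ P₂, w₂ b ∧ 4 / 5 ≤ ∑ b ∈ P₃, w₃ b) →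
      (∃ P₁ P₂ P₃ : Finset ι,
      Disjoint P₁ P₂ ∧ Disjoint P₁ P₃ ∧ Disjoint P₂ P₃ ∧
      P₁ ∪ P₂ ∪ P₃ = X ∪ Y ∪ Z ∧
      4 / 5 ≤ V₁ P₁ ∧ 4 / 5 ≤ V₂ P₂ ∧ 4 / 5 ≤ V₃ P₃) := by
    rintro ⟨P₁, P₂, P₃, d1, d2, d3, hu, b1, b2, b3⟩
    exact ⟨P₁, P₂, P₃, d1, d2, d3, hu, by rwa [hV1], by rwa [hV2'], by rwa [hV3']⟩
  apply finish
  rcases le_total (∑ b ∈ X, w₃ b) (∑ b ∈ Y, w₃ b) with hxy | hxy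
  · rcases le_total (∑ b ∈ Y, w₃ b) (∑ b ∈ Z, w₃ b) with hyz | hyz
    · -- x ≤ y ≤ z : A = Y, B = X, C = Z
      exact repartition_ordered Y X Z _ (by ext x; simp only [Finset.mem_union]; tauto)
        hXY.symm hYZ hXZ w₁ w₂ w₃ hw1 hw2 hw3 hV1Y hV1X hV1Z hV2 hV3 hitem'
        hyz (hxy.trans hyz) hxy
    · rcases le_total (∑ b ∈ X, w₃ b) (∑ b ∈ Z, w₃ b) with hxz | hxz
      · -- x ≤ z ≤ y : A = Z, B = X, C = Y
        exact repartition_ordered Z X Y _ (by ext x; simp only [Finset.mem_union]; tauto)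
          hXZ.symm hYZ.symm hXY w₁ w₂ w₃ hw1 hw2 hw3 hV1Z hV1X hV1Y hV2 hV3 hitem'
          hyz hxy hxz
      · -- z ≤ x ≤ y : A = X, B = Z, C = Y
        exact repartition_ordered X Z Y _ (by ext x; simp only [Finset.mem_union]; tauto)
          hXZ hXY hYZ.symm w₁ w₂ w₃ hw1 hw2 hw3 hV1X hV1Z hV1Y hV2 hV3 hitem'
          hxy (hxz.trans hxy) hxz
  · rcases le_total (∑ b ∈ X, w₃ b) (∑ b ∈ Z, w₃ b) with hxz | hxz
    · -- y ≤ x ≤ z : A = X, B = Y, C = Z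
      exact repartition_ordered X Y Z _ rfl
        hXY hXZ hYZ w₁ w₂ w₃ hw1 hw2 hw3 hV1X hV1Y hV1Z hV2 hV3 hitem'
        hxz (hxy.trans hxz) hxy
    · rcases le_total (∑ b ∈ Y, w₃ b) (∑ b ∈ Z, w₃ b) with hyz | hyz
      · -- y ≤ z ≤ x : A = Z, B = Y, C = X
        exact repartition_ordered Z Y X _ (by ext x; simp only [Finset.mem_union]; tauto)
          hYZ.symm hXZ.symm hXY.symm w₁ w₂ w₃ hw1 hw2 hw3 hV1Z hV1Y hV1X hV2 hV3 hitem'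
          hxz hxy hyz
      · -- z ≤ y ≤ x : A = Y, B = Z, C = X
        exact repartition_ordered Y Z X _ (by ext x; simp only [Finset.mem_union]; tauto)
          hYZ hXY.symm hXZ.symm w₁ w₂ w₃ hw1 hw2 hw3 hV1Y hV1Z hV1X hV2 hV3 hitem'
          hxy (hyz.trans hxy) hyz
end
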